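/- arXiv:1907.08585 — 10 statements merged into one kernel-verified Lean document; each statement's English description precedes it below -/
import Mathlib

section
/- Let a > 0 and b > 0 be real numbers, let h be a bivariate real polynomial all of whose monomials have total degree at least 3, and let f : ℝ² → ℝ be the polynomial function f(x,y) = a·x² + b·y² + h(x,y) (so f(0,0) = 0 and the origin is a Morse strict local minimum of f). Then there exists ε₀ > 0 such that for every ε with 0 < ε < ε₀, the connected component containing the origin of the sublevel set {p ∈ ℝ² : f(p) ≤ ε} is a convex subset of ℝ². -/
open MvPolynomial Finset Metric Set

private lemma euc_sq (p : EuclideanSpace ℝ (Fin 2)) : (p 0)^2 + (p 1)^2 = ‖p‖^2 := by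
  rw [EuclideanSpace.norm_eq, Real.sq_sqrt (by positivity)]
  simp [Fin.sum_univ_two, sq_abs]

private lemma euc_coord_le (p : EuclideanSpace ℝ (Fin 2)) (i : Fin 2) : |p i| ≤ ‖p‖ := by
  have h2 : (p i)^2 ≤ ‖p‖^2 := by
    rw [← euc_sq p]
    fin_cases i <;> simp <;> nlinarith [sq_nonneg (p 0), sq_nonneg (p 1)]
  calc |p i| = Real.sqrt ((p i)^2) := (Real.sqrt_sq_eq_abs _).symm
    _ ≤ Real.sqrt (‖p‖^2) := Real.sqrt_le_sqrt h2
    _ = ‖p‖ := by rw [Real.sqrt_sq (norm_nonneg p)]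

/-- products of small powers are ≤ r -/
private lemma pow_prod_le {At Bt r : ℝ} (k l : ℕ) (hA : |At| ≤ r) (hB : |Bt| ≤ r)
    (hr1 : r ≤ 1) (hkl : 1 ≤ k + l) : |At ^ k * Bt ^ l| ≤ r := by
  have hr0 : 0 ≤ r := le_trans (abs_nonneg _) hA
  have h1 : |At ^ k * Bt ^ l| = |At|^k * |Bt|^l := by
    rw [abs_mul, abs_pow, abs_pow]
  rw [h1]
  calc |At|^k * |Bt|^l ≤ r^k * r^l := by
        apply mul_le_mul (pow_le_pow_left₀ (abs_nonneg _) hA k)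
          (pow_le_pow_left₀ (abs_nonneg _) hB l) (by positivity) (by positivity)
    _ = r^(k+l) := (pow_add r k l).symm
    _ ≤ r^1 := pow_le_pow_of_le_one hr0 hr1 hkl
    _ = r := pow_one r

private lemma gbound {At Bt u v r nu : ℝ} (c : ℝ) (hc : 0 ≤ c) (k l : ℕ)
    (hA : |At| ≤ r) (hB : |Bt| ≤ r) (hr1 : r ≤ 1) (hkl : 1 ≤ k + l)
    (hu : |u| ≤ nu) (hv : |v| ≤ nu) :
    |c * (At ^ k * Bt ^ l) * (u * v)| ≤ c * (r * nu ^ 2) := by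
  have hnu : 0 ≤ nu := le_trans (abs_nonneg _) hu
  have hr0 : 0 ≤ r := le_trans (abs_nonneg _) hA
  rw [abs_mul, abs_mul, abs_of_nonneg hc]
  have h1 : |At ^ k * Bt ^ l| ≤ r := pow_prod_le k l hA hB hr1 hkl
  have h2 : |u * v| ≤ nu ^ 2 := by
    rw [abs_mul, sq]
    exact mul_le_mul hu hv (abs_nonneg _) hnu
  calc c * |At ^ k * Bt ^ l| * |u * v| ≤ c * r * nu ^ 2 := by
        apply mul_le_mul (mul_le_mul le_rfl h1 (abs_nonneg _) hc) h2 (abs_nonneg _) (by positivity)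
    _ = c * (r * nu ^ 2) := by ring

private lemma TB1 {At Bt u0 r nu : ℝ} (hA : |At| ≤ r) (hB : |Bt| ≤ r) (hr1 : r ≤ 1)
    (hu0 : |u0| ≤ nu) (m n : ℕ) (h3 : 3 ≤ m + n) :
    |(m : ℝ) * (((m - 1 : ℕ) : ℝ) * At ^ (m - 1 - 1) * u0) * u0 * Bt ^ n|
      ≤ (m : ℝ) ^ 2 * (r * nu ^ 2) := by
  have hr0 : 0 ≤ r := le_trans (abs_nonneg _) hA
  have hnu : 0 ≤ nu := le_trans (abs_nonneg _) hu0
  rcases m with _|_|k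
  · simpa using by positivity
  · simpa using by positivity
  · 
    simp only [show k+1+1-1-1 = k from rfl, show k+1+1-1 = k+1 from rfl,
      show k+1-1 = k from rfl]
    have e : ((k+1+1 : ℕ) : ℝ) * (((k+1 : ℕ) : ℝ) * At ^ k * u0) * u0 * Bt ^ n
        = (((k+1+1 : ℕ) : ℝ) * ((k+1 : ℕ) : ℝ)) * (At ^ k * Bt ^ n) * (u0 * u0) := by
      ring
    rw [e]
    calc |(((k+1+1 : ℕ) : ℝ) * ((k+1 : ℕ) : ℝ)) * (At ^ k * Bt ^ n) * (u0 * u0)|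
        ≤ (((k+1+1 : ℕ) : ℝ) * ((k+1 : ℕ) : ℝ)) * (r * nu ^ 2) :=
          gbound _ (by positivity) k n hA hB hr1 (by omega) hu0 hu0
      _ ≤ ((k+1+1 : ℕ) : ℝ) ^ 2 * (r * nu ^ 2) := by
          have hc : ((k+1 : ℕ) : ℝ) ≤ ((k+1+1 : ℕ) : ℝ) := by push_cast; linarith
          have h0 : (0:ℝ) ≤ ((k+1+1 : ℕ) : ℝ) := by positivity
          have hcc : ((k+1+1 : ℕ) : ℝ) * ((k+1 : ℕ) : ℝ) ≤ ((k+1+1 : ℕ) : ℝ) ^ 2 := by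
            nlinarith
          exact mul_le_mul_of_nonneg_right hcc (by positivity)

private lemma TB2 {At Bt u0 u1 r nu : ℝ} (hA : |At| ≤ r) (hB : |Bt| ≤ r) (hr1 : r ≤ 1)
    (hu0 : |u0| ≤ nu) (hu1 : |u1| ≤ nu) (m n : ℕ) (h3 : 3 ≤ m + n) :
    |(m : ℝ) * At ^ (m - 1) * u0 * ((n : ℝ) * Bt ^ (n - 1) * u1)|
      ≤ (m : ℝ) * (n : ℝ) * (r * nu ^ 2) := by
  have hr0 : 0 ≤ r := le_trans (abs_nonneg _) hA
  have hnu : 0 ≤ nu := le_trans (abs_nonneg _) hu0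
  rcases m with _|k
  · simpa using by positivity
  rcases n with _|l
  · simpa using by positivity
  · 
    simp only [show k+1-1 = k from rfl, show l+1-1 = l from rfl]
    have e : ((k+1 : ℕ) : ℝ) * At ^ k * u0 * (((l+1 : ℕ) : ℝ) * Bt ^ l * u1)
        = (((k+1 : ℕ) : ℝ) * ((l+1 : ℕ) : ℝ)) * (At ^ k * Bt ^ l) * (u0 * u1) := by
      ring
    rw [e]
    exact gbound _ (by positivity) k l hA hB hr1 (by omega) hu0 hu1

private lemma TB3 {At Bt u1 r nu : ℝ} (hA : |At| ≤ r) (hB : |Bt| ≤ r) (hr1 : r ≤ 1)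
    (hu1 : |u1| ≤ nu) (m n : ℕ) (h3 : 3 ≤ m + n) :
    |At ^ m * ((n : ℝ) * (((n - 1 : ℕ) : ℝ) * Bt ^ (n - 1 - 1) * u1) * u1)|
      ≤ (n : ℝ) ^ 2 * (r * nu ^ 2) := by
  have e : At ^ m * ((n : ℝ) * (((n - 1 : ℕ) : ℝ) * Bt ^ (n - 1 - 1) * u1) * u1)
      = (n : ℝ) * (((n - 1 : ℕ) : ℝ) * Bt ^ (n - 1 - 1) * u1) * u1 * At ^ m := by ring
  rw [e]
  simpa [mul_comm, mul_assoc, mul_left_comm] using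
    TB1 (At := Bt) (Bt := At) hB hA hr1 hu1 n m (by omega)

private lemma convexOn_aux (a b : ℝ) (ha : 0 < a) (hb : 0 < b) (h : MvPolynomial (Fin 2) ℝ)
    (hdeg : ∀ d ∈ h.support, 3 ≤ d 0 + d 1)
    (r : ℝ) (hr0 : 0 < r) (hr1 : r ≤ 1)
    (hK : (∑ d ∈ h.support, |h.coeff d| * ((d 0 : ℝ) + (d 1 : ℝ)) ^ 2) * r ≤ 2 * min a b) :
    ConvexOn ℝ (Metric.closedBall (0 : EuclideanSpace ℝ (Fin 2)) r)
      (fun p => a * (p 0) ^ 2 + b * (p 1) ^ 2 +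
        ∑ d ∈ h.support, h.coeff d * ((p 0) ^ (d 0) * (p 1) ^ (d 1))) := by
  constructor
  · exact convex_closedBall 0 r
  intro x hx y hy ta tb hta htb htab
  have hAt : ∀ t : ℝ, HasDerivAt (fun s => x 0 + s * (y 0 - x 0)) (y 0 - x 0) t := by
    intro t
    simpa using ((hasDerivAt_id t).mul_const (y 0 - x 0)).const_add (x 0)
  have hBt : ∀ t : ℝ, HasDerivAt (fun s => x 1 + s * (y 1 - x 1)) (y 1 - x 1) t := by
    intro t
    simpa using ((hasDerivAt_id t).mul_const (y 1 - x 1)).const_add (x 1)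
  set g : ℝ → ℝ := fun t => a * (x 0 + t * (y 0 - x 0)) ^ 2 + b * (x 1 + t * (y 1 - x 1)) ^ 2 +
      ∑ d ∈ h.support, h.coeff d *
        ((x 0 + t * (y 0 - x 0)) ^ (d 0) * (x 1 + t * (y 1 - x 1)) ^ (d 1)) with hgdef
  set g1 : ℝ → ℝ := fun t =>
      a * (((2:ℕ):ℝ) * (x 0 + t * (y 0 - x 0)) ^ (2-1) * (y 0 - x 0)) +
      b * (((2:ℕ):ℝ) * (x 1 + t * (y 1 - x 1)) ^ (2-1) * (y 1 - x 1)) +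
      ∑ d ∈ h.support, h.coeff d *
        (((d 0 : ℕ):ℝ) * (x 0 + t * (y 0 - x 0)) ^ (d 0 - 1) * (y 0 - x 0) *
            (x 1 + t * (y 1 - x 1)) ^ (d 1) +
          (x 0 + t * (y 0 - x 0)) ^ (d 0) *
            (((d 1 : ℕ):ℝ) * (x 1 + t * (y 1 - x 1)) ^ (d 1 - 1) * (y 1 - x 1))) with hg1def
  set g2 : ℝ → ℝ := fun t =>
      a * (((2:ℕ):ℝ) * ((((2-1:ℕ)):ℝ) * (x 0 + t * (y 0 - x 0)) ^ (2-1-1) * (y 0 - x 0)) *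
          (y 0 - x 0)) +
      b * (((2:ℕ):ℝ) * ((((2-1:ℕ)):ℝ) * (x 1 + t * (y 1 - x 1)) ^ (2-1-1) * (y 1 - x 1)) *
          (y 1 - x 1)) +
      ∑ d ∈ h.support, h.coeff d *
        ((((d 0 : ℕ):ℝ) * ((((d 0 - 1 : ℕ)):ℝ) * (x 0 + t * (y 0 - x 0)) ^ (d 0 - 1 - 1) *
              (y 0 - x 0)) * (y 0 - x 0) * (x 1 + t * (y 1 - x 1)) ^ (d 1) +
            ((d 0 : ℕ):ℝ) * (x 0 + t * (y 0 - x 0)) ^ (d 0 - 1) * (y 0 - x 0) *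
              (((d 1 : ℕ):ℝ) * (x 1 + t * (y 1 - x 1)) ^ (d 1 - 1) * (y 1 - x 1))) +
          (((d 0 : ℕ):ℝ) * (x 0 + t * (y 0 - x 0)) ^ (d 0 - 1) * (y 0 - x 0) *
              (((d 1 : ℕ):ℝ) * (x 1 + t * (y 1 - x 1)) ^ (d 1 - 1) * (y 1 - x 1)) +
            (x 0 + t * (y 0 - x 0)) ^ (d 0) *
              (((d 1 : ℕ):ℝ) * ((((d 1 - 1 : ℕ)):ℝ) * (x 1 + t * (y 1 - x 1)) ^ (d 1 - 1 - 1) *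
                (y 1 - x 1)) * (y 1 - x 1)))) with hg2def
  have hg : ∀ t : ℝ, HasDerivAt g (g1 t) t := by
    intro t
    exact ((((hAt t).pow 2).const_mul a).add (((hBt t).pow 2).const_mul b)).add
      (HasDerivAt.fun_sum fun d _ =>
        (((hAt t).fun_pow (d 0)).mul ((hBt t).fun_pow (d 1))).const_mul (h.coeff d))
  have hg1 : ∀ t : ℝ, HasDerivAt g1 (g2 t) t := by
    intro t
    have h1 := ((((hAt t).fun_pow (2-1)).const_mul ((2:ℕ):ℝ)).mul_const (y 0 - x 0)).const_mul a
    have h2 := ((((hBt t).fun_pow (2-1)).const_mul ((2:ℕ):ℝ)).mul_const (y 1 - x 1)).const_mul b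
    have h3 := HasDerivAt.fun_sum (u := h.support) fun d (_ : d ∈ h.support) =>
      ((((((hAt t).fun_pow (d 0 - 1)).const_mul ((d 0 : ℕ):ℝ)).mul_const (y 0 - x 0)).mul
        ((hBt t).fun_pow (d 1))).add
        (((hAt t).fun_pow (d 0)).mul
          ((((hBt t).fun_pow (d 1 - 1)).const_mul ((d 1 : ℕ):ℝ)).mul_const (y 1 - x 1)))).const_mul
        (h.coeff d)
    exact (h1.add h2).add h3
  have hu0 : |y 0 - x 0| ≤ ‖y - x‖ := by
    simpa using euc_coord_le (y - x) 0
  have hu1 : |y 1 - x 1| ≤ ‖y - x‖ := by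
    simpa using euc_coord_le (y - x) 1
  have hnusq : ‖y - x‖ ^ 2 = (y 0 - x 0) ^ 2 + (y 1 - x 1) ^ 2 := by
    rw [← euc_sq (y - x)]
    simp
  have hcb : ∀ t ∈ Set.Icc (0:ℝ) 1,
      |x 0 + t * (y 0 - x 0)| ≤ r ∧ |x 1 + t * (y 1 - x 1)| ≤ r := by
    intro t ht
    have hw : (1 - t) • x + t • y ∈ Metric.closedBall (0 : EuclideanSpace ℝ (Fin 2)) r :=
      (convex_closedBall (0 : EuclideanSpace ℝ (Fin 2)) r) hx hy (by linarith [ht.2]) ht.1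
        (by ring)
    have hwn : ‖(1 - t) • x + t • y‖ ≤ r := by
      simpa [Metric.mem_closedBall, dist_zero_right] using hw
    constructor
    · have h0 := euc_coord_le ((1 - t) • x + t • y) 0
      have e : ((1 - t) • x + t • y) 0 = x 0 + t * (y 0 - x 0) := by
        simp [PiLp.add_apply, PiLp.smul_apply, smul_eq_mul]
        ring
      rw [e] at h0
      exact h0.trans hwn
    · have h0 := euc_coord_le ((1 - t) • x + t • y) 1
      have e : ((1 - t) • x + t • y) 1 = x 1 + t * (y 1 - x 1) := by
        simp [PiLp.add_apply, PiLp.smul_apply, smul_eq_mul]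
        ring
      rw [e] at h0
      exact h0.trans hwn
  have hg2nonneg : ∀ t ∈ Set.Icc (0:ℝ) 1, 0 ≤ g2 t := by
    intro t ht
    obtain ⟨hAb, hBb⟩ := hcb t ht
    have hsum : |∑ d ∈ h.support, h.coeff d *
        ((((d 0 : ℕ):ℝ) * ((((d 0 - 1 : ℕ)):ℝ) * (x 0 + t * (y 0 - x 0)) ^ (d 0 - 1 - 1) *
              (y 0 - x 0)) * (y 0 - x 0) * (x 1 + t * (y 1 - x 1)) ^ (d 1) +
            ((d 0 : ℕ):ℝ) * (x 0 + t * (y 0 - x 0)) ^ (d 0 - 1) * (y 0 - x 0) *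
              (((d 1 : ℕ):ℝ) * (x 1 + t * (y 1 - x 1)) ^ (d 1 - 1) * (y 1 - x 1))) +
          (((d 0 : ℕ):ℝ) * (x 0 + t * (y 0 - x 0)) ^ (d 0 - 1) * (y 0 - x 0) *
              (((d 1 : ℕ):ℝ) * (x 1 + t * (y 1 - x 1)) ^ (d 1 - 1) * (y 1 - x 1)) +
            (x 0 + t * (y 0 - x 0)) ^ (d 0) *
              (((d 1 : ℕ):ℝ) * ((((d 1 - 1 : ℕ)):ℝ) * (x 1 + t * (y 1 - x 1)) ^ (d 1 - 1 - 1) *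
                (y 1 - x 1)) * (y 1 - x 1))))| ≤
        (∑ d ∈ h.support, |h.coeff d| * ((d 0 : ℝ) + (d 1 : ℝ)) ^ 2) * (r * ‖y - x‖ ^ 2) := by
      refine le_trans (Finset.abs_sum_le_sum_abs _ _) ?_
      rw [Finset.sum_mul]
      refine Finset.sum_le_sum fun d hd => ?_
      rw [abs_mul]
      refine le_trans (mul_le_mul_of_nonneg_left ?_ (abs_nonneg (h.coeff d)))
        (le_of_eq (mul_assoc _ _ _).symm)
      have h3 : 3 ≤ d 0 + d 1 := hdeg d hd
      refine le_trans (abs_add_le _ _) (le_trans (add_le_add (abs_add_le _ _) (abs_add_le _ _)) ?_)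
      have t1 := TB1 hAb hBb hr1 hu0 (d 0) (d 1) h3
      have t2 := TB2 hAb hBb hr1 hu0 hu1 (d 0) (d 1) h3
      have t3 := TB3 hAb hBb hr1 hu1 (d 0) (d 1) h3
      calc _ ≤ ((d 0 : ℝ) ^ 2 * (r * ‖y - x‖ ^ 2) + (d 0 : ℝ) * (d 1 : ℝ) * (r * ‖y - x‖ ^ 2))
            + ((d 0 : ℝ) * (d 1 : ℝ) * (r * ‖y - x‖ ^ 2) + (d 1 : ℝ) ^ 2 * (r * ‖y - x‖ ^ 2)) :=
            add_le_add (add_le_add t1 t2) (add_le_add t2 t3)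
        _ = ((d 0 : ℝ) + (d 1 : ℝ)) ^ 2 * (r * ‖y - x‖ ^ 2) := by ring
    have hmn : 2 * (min a b) * ‖y - x‖ ^ 2 =
        2 * (min a b) * (y 0 - x 0) ^ 2 + 2 * (min a b) * (y 1 - x 1) ^ 2 := by
      rw [hnusq]; ring
    have e1 : (a - min a b) * (y 0 - x 0) ^ 2 ≥ 0 :=
      mul_nonneg (by simp [min_le_left]) (sq_nonneg _)
    have e2 : (b - min a b) * (y 1 - x 1) ^ 2 ≥ 0 :=
      mul_nonneg (by simp [min_le_right]) (sq_nonneg _)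
    have hKX := mul_le_mul_of_nonneg_right hK (sq_nonneg ‖y - x‖)
    have hlow := neg_abs_le (∑ d ∈ h.support, h.coeff d *
        ((((d 0 : ℕ):ℝ) * ((((d 0 - 1 : ℕ)):ℝ) * (x 0 + t * (y 0 - x 0)) ^ (d 0 - 1 - 1) *
              (y 0 - x 0)) * (y 0 - x 0) * (x 1 + t * (y 1 - x 1)) ^ (d 1) +
            ((d 0 : ℕ):ℝ) * (x 0 + t * (y 0 - x 0)) ^ (d 0 - 1) * (y 0 - x 0) *
              (((d 1 : ℕ):ℝ) * (x 1 + t * (y 1 - x 1)) ^ (d 1 - 1) * (y 1 - x 1))) +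
          (((d 0 : ℕ):ℝ) * (x 0 + t * (y 0 - x 0)) ^ (d 0 - 1) * (y 0 - x 0) *
              (((d 1 : ℕ):ℝ) * (x 1 + t * (y 1 - x 1)) ^ (d 1 - 1) * (y 1 - x 1)) +
            (x 0 + t * (y 0 - x 0)) ^ (d 0) *
              (((d 1 : ℕ):ℝ) * ((((d 1 - 1 : ℕ)):ℝ) * (x 1 + t * (y 1 - x 1)) ^ (d 1 - 1 - 1) *
                (y 1 - x 1)) * (y 1 - x 1)))))
    rw [hg2def]
    have hq : ((2:ℕ):ℝ) = 2 := by norm_num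
    have hq1 : ((2-1:ℕ):ℝ) = 1 := by norm_num
    simp only [hq, hq1, show (2-1-1 : ℕ) = 0 from rfl, pow_zero, one_mul, mul_one]
    nlinarith [hlow.trans' (neg_le_neg hsum), hKX, hmn, e1, e2]
  have gcv : ConvexOn ℝ (Set.Icc (0:ℝ) 1) g := by
    have hdg : deriv g = g1 := funext fun s => (hg s).deriv
    refine convexOn_of_deriv2_nonneg (convex_Icc 0 1)
      (fun t _ => (hg t).differentiableAt.continuousAt.continuousWithinAt)
      (fun t _ => (hg t).differentiableAt.differentiableWithinAt) ?_ ?_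
    · rw [hdg]
      exact fun t _ => (hg1 t).differentiableAt.differentiableWithinAt
    · intro t ht
      have h2 : deriv^[2] g t = g2 t := by
        show deriv (deriv g) t = g2 t
        rw [hdg]
        exact (hg1 t).deriv
      rw [h2]
      exact hg2nonneg t (interior_subset ht)
  have key := gcv.2 (Set.left_mem_Icc.mpr zero_le_one) (Set.right_mem_Icc.mpr zero_le_one)
    hta htb htab
  have esm : ta • (0:ℝ) + tb • (1:ℝ) = tb := by
    simp [smul_eq_mul]
  rw [esm] at key
  have e0 : g 0 = a * (x 0) ^ 2 + b * (x 1) ^ 2 +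
      ∑ d ∈ h.support, h.coeff d * ((x 0) ^ (d 0) * (x 1) ^ (d 1)) := by
    rw [hgdef]
    norm_num
  have e1 : g 1 = a * (y 0) ^ 2 + b * (y 1) ^ 2 +
      ∑ d ∈ h.support, h.coeff d * ((y 0) ^ (d 0) * (y 1) ^ (d 1)) := by
    rw [hgdef]
    norm_num
  rw [e0, e1] at key
  have hz0 : (ta • x + tb • y) 0 = x 0 + tb * (y 0 - x 0) := by
    have e : (ta • x + tb • y) 0 = ta * x 0 + tb * y 0 := by
      simp [PiLp.add_apply, PiLp.smul_apply, smul_eq_mul]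
    rw [e]
    linear_combination (x 0) * htab
  have hz1 : (ta • x + tb • y) 1 = x 1 + tb * (y 1 - x 1) := by
    have e : (ta • x + tb • y) 1 = ta * x 1 + tb * y 1 := by
      simp [PiLp.add_apply, PiLp.smul_apply, smul_eq_mul]
    rw [e]
    linear_combination (x 1) * htab
  simp only [smul_eq_mul]
  rw [hz0, hz1]
  exact key

/-- For `f(x,y) = a·x² + b·y² + h(x,y)` with `a, b > 0` and `h` a polynomial all of
whose monomials have total degree at least 3 (so the origin is a Morse strict local minimum of
`f`), there exists `ε₀ > 0` such that for every `0 < ε < ε₀`, the connected component containing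
the origin of the sublevel set `{p : f p ≤ ε}` is a convex subset of the plane. -/
theorem morse_min_sublevel_component_convex (a b : ℝ) (ha : 0 < a) (hb : 0 < b)
    (h : MvPolynomial (Fin 2) ℝ)
    (hdeg : ∀ d ∈ h.support, 3 ≤ d.sum fun _ e => e)
    (f : EuclideanSpace ℝ (Fin 2) → ℝ)
    (hf : ∀ p : EuclideanSpace ℝ (Fin 2),
      f p = a * (p 0) ^ 2 + b * (p 1) ^ 2 + MvPolynomial.eval ![p 0, p 1] h) :
    ∃ ε₀ > 0, ∀ ε : ℝ, 0 < ε → ε < ε₀ →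
      Convex ℝ (connectedComponentIn {p : EuclideanSpace ℝ (Fin 2) | f p ≤ ε} 0) := by
  classical
  have hm0 : 0 < min a b := lt_min ha hb
  set m := min a b with hm
  set C := ∑ d ∈ h.support, |h.coeff d| with hCdef
  set K := ∑ d ∈ h.support, |h.coeff d| * ((d 0 : ℝ) + (d 1 : ℝ)) ^ 2 with hKdef
  have hC0 : 0 ≤ C := Finset.sum_nonneg fun d _ => abs_nonneg _
  have hK0 : 0 ≤ K := Finset.sum_nonneg fun d _ => mul_nonneg (abs_nonneg _) (sq_nonneg _)
  set r := min 1 (min (2 * m / (K + 1)) (m / (2 * (C + 1)))) with hrdef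
  have hr0 : 0 < r := lt_min one_pos (lt_min (by positivity) (by positivity))
  have hr1 : r ≤ 1 := min_le_left _ _
  have hrK : K * r ≤ 2 * m := by
    have h1 : r ≤ 2 * m / (K + 1) := le_trans (min_le_right _ _) (min_le_left _ _)
    have h2 : K * r ≤ K * (2 * m / (K + 1)) := mul_le_mul_of_nonneg_left h1 hK0
    refine h2.trans ?_
    rw [← mul_div_assoc]
    have hK1 : (0:ℝ) < K + 1 := by linarith
    rw [div_le_iff₀ hK1]
    nlinarith
  have hrC : C * r ≤ m / 2 := by
    have h1 : r ≤ m / (2 * (C + 1)) := le_trans (min_le_right _ _) (min_le_right _ _)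
    have h2 : C * r ≤ C * (m / (2 * (C + 1))) := mul_le_mul_of_nonneg_left h1 hC0
    refine h2.trans ?_
    rw [← mul_div_assoc]
    have hC1 : (0:ℝ) < 2 * (C + 1) := by linarith
    rw [div_le_iff₀ hC1]
    nlinarith
  have hfeq : ∀ p : EuclideanSpace ℝ (Fin 2), f p = a * (p 0) ^ 2 + b * (p 1) ^ 2 +
      ∑ d ∈ h.support, h.coeff d * ((p 0) ^ (d 0) * (p 1) ^ (d 1)) := by
    intro p
    rw [hf p, MvPolynomial.eval_eq']
    congr 1
    refine Finset.sum_congr rfl fun d hd => ?_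
    rw [Fin.prod_univ_two]
    simp
  have hdeg' : ∀ d ∈ h.support, 3 ≤ d 0 + d 1 := by
    intro d hd
    have hh := hdeg d hd
    rwa [Finsupp.sum_fintype _ _ (fun _ => rfl), Fin.sum_univ_two] at hh
  have hlower : ∀ p : EuclideanSpace ℝ (Fin 2), ‖p‖ ≤ 1 →
      m * ‖p‖ ^ 2 - C * ‖p‖ ^ 3 ≤ f p := by
    intro p hp
    rw [hfeq p]
    have h1 : m * ‖p‖ ^ 2 ≤ a * (p 0) ^ 2 + b * (p 1) ^ 2 := by
      rw [← euc_sq p]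
      nlinarith [min_le_left a b, min_le_right a b, sq_nonneg (p 0), sq_nonneg (p 1)]
    have h2 : |∑ d ∈ h.support, h.coeff d * ((p 0) ^ (d 0) * (p 1) ^ (d 1))| ≤ C * ‖p‖ ^ 3 := by
      refine le_trans (Finset.abs_sum_le_sum_abs _ _) ?_
      rw [hCdef, Finset.sum_mul]
      refine Finset.sum_le_sum fun d hd => ?_
      rw [abs_mul]
      refine mul_le_mul_of_nonneg_left ?_ (abs_nonneg (h.coeff d))
      have h3 := hdeg' d hd
      have e : |(p 0) ^ (d 0) * (p 1) ^ (d 1)| = |p 0| ^ (d 0) * |p 1| ^ (d 1) := by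
        rw [abs_mul, abs_pow, abs_pow]
      rw [e]
      calc |p 0| ^ (d 0) * |p 1| ^ (d 1) ≤ ‖p‖ ^ (d 0) * ‖p‖ ^ (d 1) := by
            apply mul_le_mul (pow_le_pow_left₀ (abs_nonneg _) (euc_coord_le p 0) _)
              (pow_le_pow_left₀ (abs_nonneg _) (euc_coord_le p 1) _) (by positivity) (by positivity)
        _ = ‖p‖ ^ (d 0 + d 1) := (pow_add _ _ _).symm
        _ ≤ ‖p‖ ^ 3 := pow_le_pow_of_le_one (norm_nonneg p) hp h3
    have h4 := neg_abs_le (∑ d ∈ h.support, h.coeff d * ((p 0) ^ (d 0) * (p 1) ^ (d 1)))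
    linarith
  refine ⟨m * r ^ 2 / 8, by positivity, ?_⟩
  intro ε hε hεlt
  set S := {p : EuclideanSpace ℝ (Fin 2) | f p ≤ ε} with hSdef
  have h0S : (0 : EuclideanSpace ℝ (Fin 2)) ∈ S := by
    show f 0 ≤ ε
    rw [hfeq 0]
    have hz0 : (0 : EuclideanSpace ℝ (Fin 2)) 0 = 0 := rfl
    have hz1 : (0 : EuclideanSpace ℝ (Fin 2)) 1 = 0 := rfl
    rw [hz0, hz1]
    have hsz : ∑ d ∈ h.support, h.coeff d * ((0:ℝ) ^ (d 0) * (0:ℝ) ^ (d 1)) = 0 := by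
      refine Finset.sum_eq_zero fun d hd => ?_
      have h3 := hdeg' d hd
      by_cases h0 : d 0 = 0
      · have h1 : d 1 ≠ 0 := by omega
        rw [zero_pow h1]
        ring
      · rw [zero_pow h0]
        ring
    rw [hsz]
    norm_num
    linarith
  have hann : ∀ p : EuclideanSpace ℝ (Fin 2), r / 2 ≤ ‖p‖ → ‖p‖ ≤ r → ε < f p := by
    intro p h1 h2
    have hl := hlower p (h2.trans hr1)
    have hnn : 0 ≤ ‖p‖ := norm_nonneg p
    have hCp : C * ‖p‖ ≤ m / 2 := (mul_le_mul_of_nonneg_left h2 hC0).trans hrC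
    have hA1 : (C * ‖p‖) * ‖p‖ ^ 2 ≤ (m / 2) * ‖p‖ ^ 2 :=
      mul_le_mul_of_nonneg_right hCp (sq_nonneg _)
    have hA2 : (m / 2) * (r / 2) ^ 2 ≤ (m / 2) * ‖p‖ ^ 2 :=
      mul_le_mul_of_nonneg_left (by nlinarith) (by linarith)
    nlinarith
  have hSsub : S ⊆ Metric.ball (0 : EuclideanSpace ℝ (Fin 2)) (r / 2) ∪
      (Metric.closedBall (0 : EuclideanSpace ℝ (Fin 2)) r)ᶜ := by
    intro p hp
    by_cases h1 : ‖p‖ < r / 2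
    · left
      simpa [Metric.mem_ball, dist_zero_right] using h1
    · right
      simp only [Set.mem_compl_iff, Metric.mem_closedBall, dist_zero_right, not_le]
      push_neg at h1
      by_contra h2
      push_neg at h2
      exact absurd (hann p h1 h2) (not_lt.mpr hp)
  have hdisj : Disjoint (Metric.ball (0 : EuclideanSpace ℝ (Fin 2)) (r / 2))
      (Metric.closedBall (0 : EuclideanSpace ℝ (Fin 2)) r)ᶜ := by
    rw [Set.disjoint_left]
    intro p hp hpc
    exact hpc ((Metric.ball_subset_closedBall.trans
      (Metric.closedBall_subset_closedBall (by linarith))) hp)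
  have hTS : connectedComponentIn S 0 ⊆ S := connectedComponentIn_subset S 0
  have hTpre : IsPreconnected (connectedComponentIn S 0) := isPreconnected_connectedComponentIn
  have h0T : (0 : EuclideanSpace ℝ (Fin 2)) ∈ connectedComponentIn S 0 :=
    mem_connectedComponentIn h0S
  have hTU : connectedComponentIn S 0 ⊆ Metric.ball 0 (r / 2) :=
    hTpre.subset_left_of_subset_union Metric.isOpen_ball Metric.isClosed_closedBall.isOpen_compl
      hdisj (hTS.trans hSsub) ⟨0, h0T, by simp [Metric.mem_ball]; positivity⟩
  have hconv : ConvexOn ℝ (Metric.closedBall (0 : EuclideanSpace ℝ (Fin 2)) (r / 2)) f := by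
    have hca := convexOn_aux a b ha hb h hdeg' r hr0 hr1 (by rw [← hKdef]; exact hrK)
    have heq : f = fun p => a * (p 0) ^ 2 + b * (p 1) ^ 2 +
        ∑ d ∈ h.support, h.coeff d * ((p 0) ^ (d 0) * (p 1) ^ (d 1)) := funext hfeq
    rw [heq]
    exact hca.subset (Metric.closedBall_subset_closedBall (by linarith)) (convex_closedBall _ _)
  have hCCconv : Convex ℝ {p ∈ Metric.closedBall (0 : EuclideanSpace ℝ (Fin 2)) (r / 2) |
      f p ≤ ε} := hconv.convex_le ε
  have hCCsubS : {p ∈ Metric.closedBall (0 : EuclideanSpace ℝ (Fin 2)) (r / 2) | f p ≤ ε} ⊆ S :=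
    fun p hp => hp.2
  have h0CC : (0 : EuclideanSpace ℝ (Fin 2)) ∈
      {p ∈ Metric.closedBall (0 : EuclideanSpace ℝ (Fin 2)) (r / 2) | f p ≤ ε} :=
    ⟨by simp [Metric.mem_closedBall]; positivity, h0S⟩
  have hCCT : {p ∈ Metric.closedBall (0 : EuclideanSpace ℝ (Fin 2)) (r / 2) | f p ≤ ε} ⊆
      connectedComponentIn S 0 :=
    hCCconv.isPreconnected.subset_connectedComponentIn h0CC hCCsubS
  have hTCC : connectedComponentIn S 0 ⊆
      {p ∈ Metric.closedBall (0 : EuclideanSpace ℝ (Fin 2)) (r / 2) | f p ≤ ε} :=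
    fun p hp => ⟨Metric.ball_subset_closedBall (hTU hp), hTS hp⟩
  have hfin : connectedComponentIn S 0 =
      {p ∈ Metric.closedBall (0 : EuclideanSpace ℝ (Fin 2)) (r / 2) | f p ≤ ε} :=
    Set.Subset.antisymm hTCC hCCT
  rw [hfin]
  exact hCCconv
end

section
/- Let f : ℝ² → ℝ be the polynomial function f(x,y) = x² + (y² − x)² (Coste's example). For every ε > 0, the connected component containing the origin of the sublevel set {p ∈ ℝ² : f(p) ≤ ε} is not a convex subset of ℝ². -/
/-- Coste's example: for `f(x,y) = x² + (y² − x)²`, for every `ε > 0` the connected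
component containing the origin of the sublevel set `{p : f p ≤ ε}` is not convex. -/
theorem coste_example_not_convex (f : EuclideanSpace ℝ (Fin 2) → ℝ)
    (hf : ∀ p : EuclideanSpace ℝ (Fin 2), f p = (p 0) ^ 2 + ((p 1) ^ 2 - p 0) ^ 2) :
    ∀ ε : ℝ, 0 < ε →
      ¬ Convex ℝ (connectedComponentIn {p : EuclideanSpace ℝ (Fin 2) | f p ≤ ε} 0) := by
  intro ε hε hconv
  set S : Set (EuclideanSpace ℝ (Fin 2)) := {p | f p ≤ ε} with hS
  set r : ℝ := (3 * ε / 4) ^ ((1 : ℝ) / 4) with hrdef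
  have hrpos : 0 < r := Real.rpow_pos_of_pos (by linarith) _
  have hr4 : r ^ 4 = 3 * ε / 4 := by
    rw [hrdef, ← Real.rpow_natCast _ 4, ← Real.rpow_mul (by linarith)]
    norm_num
  set g : ℝ → EuclideanSpace ℝ (Fin 2) :=
    fun t => (WithLp.equiv 2 (Fin 2 → ℝ)).symm ![t ^ 2, t] with hgdef
  have hg0 : ∀ t, g t 0 = t ^ 2 := fun t => rfl
  have hg1 : ∀ t, g t 1 = t := fun t => rfl
  have hgc : Continuous g := by
    apply (PiLp.continuous_toLp 2 (fun _ : Fin 2 => ℝ)).comp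
    apply continuous_pi
    intro i
    fin_cases i <;> simp <;> fun_prop
  have hgmem : ∀ t ∈ Set.Icc (-r) r, g t ∈ S := by
    intro t ht
    simp only [hS, Set.mem_setOf_eq, hf, hg0, hg1]
    have h2 : t ^ 2 ≤ r ^ 2 := sq_le_sq' ht.1 ht.2
    nlinarith [sq_nonneg t, sq_nonneg r]
  have hgzero : g 0 = 0 := by
    ext i
    fin_cases i <;> simp [hgdef]
  have hconn : IsConnected (g '' Set.Icc (-r) r) :=
    (isConnected_Icc (by linarith : -r ≤ r)).image g hgc.continuousOn
  have hzero_mem : (0 : EuclideanSpace ℝ (Fin 2)) ∈ g '' Set.Icc (-r) r :=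
    ⟨0, ⟨by linarith, by linarith⟩, hgzero⟩
  have hsub : g '' Set.Icc (-r) r ⊆ connectedComponentIn S 0 :=
    hconn.isPreconnected.subset_connectedComponentIn hzero_mem (by
      rintro _ ⟨t, ht, rfl⟩; exact hgmem t ht)
  have hp : g r ∈ connectedComponentIn S 0 :=
    hsub ⟨r, ⟨by linarith, le_refl r⟩, rfl⟩
  have hq : g (-r) ∈ connectedComponentIn S 0 :=
    hsub ⟨-r, ⟨le_refl _, by linarith⟩, rfl⟩
  have hmid := hconv hp hq (by norm_num : (0:ℝ) ≤ 1/2) (by norm_num : (0:ℝ) ≤ 1/2)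
    (by norm_num)
  have hmidS : ((1/2 : ℝ) • g r + (1/2 : ℝ) • g (-r)) ∈ S :=
    connectedComponentIn_subset S 0 hmid
  have h0 : ((1/2 : ℝ) • g r + (1/2 : ℝ) • g (-r)) 0 = r ^ 2 := by
    simp only [PiLp.add_apply, PiLp.smul_apply, smul_eq_mul, hg0]
    ring
  have h1 : ((1/2 : ℝ) • g r + (1/2 : ℝ) • g (-r)) 1 = 0 := by
    simp only [PiLp.add_apply, PiLp.smul_apply, smul_eq_mul, hg1]
    ring
  rw [hS, Set.mem_setOf_eq, hf, h0, h1] at hmidS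
  nlinarith [hr4]
end

section
/- Let D be a subset of the Euclidean plane, let Δ be a one-dimensional affine subspace (a line) of the plane, and let σ denote the orthogonal reflection of the plane across Δ. Assume that σ maps D onto D (Δ is a symmetry axis of D) and that D is star-shaped with respect to some point. Then there exists a point P ∈ D ∩ Δ such that D is star-shaped with respect to P. -/
/-- The set of star centers is closed under segments. -/
lemma starConvex_of_segment {E : Type*} [AddCommGroup E] [Module ℝ E] {D : Set E}
    {x y z : E} (hx : StarConvex ℝ x D) (hy : StarConvex ℝ y D)
    (hz : z ∈ segment ℝ x y) : StarConvex ℝ z D := by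
  obtain ⟨a, b, ha, hb, hab, rfl⟩ := hz
  intro d hd c e hc he hce
  by_cases ht : c * b + e = 0
  · have hcb : c * b = 0 := le_antisymm (by nlinarith) (by positivity)
    have he0 : e = 0 := by linarith [mul_nonneg hc hb]
    have hc1 : c = 1 := by linarith
    have hb0 : b = 0 := by
      rcases mul_eq_zero.1 hcb with h | h
      · exact absurd h (by simp [hc1])
      · exact h
    have ha1 : a = 1 := by linarith
    have hxD : x ∈ D := by
      have := hx hd (by norm_num : (0:ℝ) ≤ 1) (le_refl (0:ℝ)) (by norm_num)
      simpa using this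
    simpa [hb0, ha1, he0, hc1] using hxD
  · have ht' : 0 < c * b + e := lt_of_le_of_ne (by positivity) (Ne.symm ht)
    set t := c * b + e with htdef
    have hu : (c * b / t) • y + (e / t) • d ∈ D := by
      refine hy hd (by positivity) (by positivity) ?_
      field_simp
      exact htdef.symm
    have := hx hu (mul_nonneg hc ha) (le_of_lt ht') (by ring_nf; nlinarith)
    have heq : (c * a) • x + t • ((c * b / t) • y + (e / t) • d)
        = c • (a • x + b • y) + e • d := by
      rw [smul_add, smul_smul, smul_smul, mul_div_cancel₀ _ (ne_of_gt ht'),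
        mul_div_cancel₀ _ (ne_of_gt ht')]
      module
    rwa [heq] at this

/-- If `D` is a subset of the Euclidean plane admitting a line `Δ` as a symmetry
axis (the orthogonal reflection across `Δ` maps `D` onto `D`) and `D` is star-shaped with
respect to some of its points, then `D` is star-shaped with respect to some point of `D ∩ Δ`. -/
theorem star_domain_symmetry_axis (D : Set (EuclideanSpace ℝ (Fin 2)))
    (Δ : AffineSubspace ℝ (EuclideanSpace ℝ (Fin 2))) [Nonempty Δ]
    (hdim : Module.finrank ℝ Δ.direction = 1)
    (hsym : EuclideanGeometry.reflection Δ '' D = D)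
    (hstar : ∃ P ∈ D, StarConvex ℝ P D) :
    ∃ P ∈ D ∩ (Δ : Set (EuclideanSpace ℝ (Fin 2))), StarConvex ℝ P D := by
  obtain ⟨P, hPD, hP⟩ := hstar
  set σ := EuclideanGeometry.reflection Δ with hσ
  have hQD : σ P ∈ D := hsym ▸ ⟨P, hPD, rfl⟩
  have hQ : StarConvex ℝ (σ P) D := by
    have h := hP.affine_image (σ.toAffineIsometry.toAffineMap)
    simpa [hsym] using h
  set M := midpoint ℝ P (σ P) with hM
  have hMseg : M ∈ segment ℝ P (σ P) := midpoint_mem_segment _ _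
  have hMD : M ∈ D := hP.segment_subset hQD hMseg
  have hMΔ : M ∈ Δ := by
    have : M = (EuclideanGeometry.orthogonalProjection Δ P : EuclideanSpace ℝ (Fin 2)) := by
      rw [hM, hσ, EuclideanGeometry.reflection_apply', midpoint_eq_iff,
        AffineEquiv.pointReflection_apply]
    rw [this]
    exact (EuclideanGeometry.orthogonalProjection Δ P).2
  exact ⟨M, ⟨hMD, hMΔ⟩, starConvex_of_segment hP hQ hMseg⟩
end

section
/- Let p ≥ 3 be a natural number and let f : ℝ² → ℝ be the polynomial function f(x,y) = x^(2p) + (y² − x)². Then the origin is a strict local minimum of f, and there exists ε₀ > 0 such that for every ε with 0 < ε < ε₀ and every point P ∈ ℝ², the sublevel set D_ε = {q ∈ ℝ² : f(q) ≤ ε} is not star-shaped with respect to P. -/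
/-!
Along any segment in the strip `(y² - x)² ≤ ε` around the parabola `x = y²`, the coordinate `x`
is affine while `y²` is strictly convex; comparing the endpoints with the midpoint bounds the
vertical extent of the segment by `(64 ε)^(1/4)`. For small `ε` the sublevel set `f ≤ ε` lies in
this strip yet contains the two points `(9√ε, ±3ε^(1/4))` on the parabola; a star centre `P`
would be joined to both, and one of these segments has vertical extent at least `3ε^(1/4)`.
-/

open Set

def parabolaStrip (ε : ℝ) : Set (ℝ × ℝ) := {q | (q.2 ^ 2 - q.1) ^ 2 ≤ ε}

theorem sub_snd_pow_four_le_of_segment_subset_parabolaStrip {ε : ℝ} {A B : ℝ × ℝ}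
    (h : segment ℝ A B ⊆ parabolaStrip ε) : (B.2 - A.2) ^ 4 ≤ 64 * ε := by
  have hA : (A.2 ^ 2 - A.1) ^ 2 ≤ ε := h (left_mem_segment ℝ A B)
  have hB : (B.2 ^ 2 - B.1) ^ 2 ≤ ε := h (right_mem_segment ℝ A B)
  have hM : (((A.2 + B.2) / 2) ^ 2 - (A.1 + B.1) / 2) ^ 2 ≤ ε := by
    have := h (midpoint_mem_segment A B)
    simp only [parabolaStrip, mem_ofPred_eq, midpoint_eq_smul_add, Prod.smul_fst, Prod.smul_snd,
      Prod.fst_add, Prod.snd_add, smul_eq_mul] at this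
    convert this using 3 <;> simp only [invOf_eq_inv] <;> ring
  -- The convexity defect of `y²` at the midpoint, `(B.2 - A.2)² / 4`, is a combination of the
  -- three strip residuals with weights `1/2, 1/2, -1`.
  have hdefect : (B.2 - A.2) ^ 2 / 4 = ((A.2 ^ 2 - A.1) + (B.2 ^ 2 - B.1)) / 2
      - (((A.2 + B.2) / 2) ^ 2 - (A.1 + B.1) / 2) := by ring
  nlinarith [sq_nonneg ((A.2 ^ 2 - A.1) - (B.2 ^ 2 - B.1)),
    sq_nonneg ((A.2 ^ 2 - A.1) + (B.2 ^ 2 - B.1) + 2 * (((A.2 + B.2) / 2) ^ 2 - (A.1 + B.1) / 2))]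

theorem sub_pow_four_le (a b : ℝ) : (a - b) ^ 4 ≤ 8 * (a ^ 4 + b ^ 4) := by
  nlinarith [sq_nonneg (a + b), sq_nonneg (a ^ 2 - b ^ 2), sq_nonneg (a - b)]

theorem pow_two_mul_add_sq_pos (p : ℕ) {q : ℝ × ℝ} (hq : q ≠ 0) :
    0 < q.1 ^ (2 * p) + (q.2 ^ 2 - q.1) ^ 2 := by
  rcases eq_or_ne q.1 0 with hx | hx
  · have hy : q.2 ≠ 0 := fun hy => hq (Prod.ext hx hy)
    rw [hx, sub_zero, pow_mul]
    positivity
  · rw [pow_mul]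
    positivity

theorem mul_pow_le_of_sq_mul_le_one {c ε : ℝ} {p : ℕ} (hp : 2 ≤ p) (hc : 1 ≤ c) (hε : 0 ≤ ε)
    (h : c ^ 2 * ε ≤ 1) : (c * ε) ^ p ≤ ε :=
  calc (c * ε) ^ p ≤ (c * ε) ^ 2 := pow_le_pow_of_le_one (by positivity) (by nlinarith) hp
    _ = (c ^ 2 * ε) * ε := by ring
    _ ≤ ε := mul_le_of_le_one_left hε h

/-- For `p ≥ 3` and `f(x,y) = x^(2p) + (y² − x)²`, the origin is a strict local
minimum of `f`, and there exists `ε₀ > 0` such that for every `0 < ε < ε₀` and every point `P`,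
the sublevel set `D_ε = {q : f q ≤ ε}` is not star-shaped with respect to `P`. -/
theorem sublevel_not_star_domain (p : ℕ) (hp : 3 ≤ p) (f : ℝ × ℝ → ℝ)
    (hf : ∀ q : ℝ × ℝ, f q = q.1 ^ (2 * p) + (q.2 ^ 2 - q.1) ^ 2) :
    (∀ᶠ q in nhds ((0, 0) : ℝ × ℝ), q ≠ (0, 0) → f (0, 0) < f q) ∧
    ∃ ε₀ > 0, ∀ ε : ℝ, 0 < ε → ε < ε₀ →
      ∀ P : ℝ × ℝ, ¬ StarConvex ℝ P {q : ℝ × ℝ | f q ≤ ε} := by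
  have hf0 : f (0, 0) = 0 := by simp [hf, show 2 * p ≠ 0 by omega]
  refine ⟨.of_forall fun q hq => ?_, 1 / 6561, by norm_num, fun ε hε hε₀ P hP => ?_⟩
  · rw [hf0, hf]
    exact pow_two_mul_add_sq_pos p hq
  obtain ⟨y, hy4⟩ : ∃ y : ℝ, y ^ 4 = 81 * ε := ⟨3 * √√ε, by
    rw [show (3 * √√ε) ^ 4 = 81 * (√√ε ^ 2) ^ 2 by ring, Real.sq_sqrt (by positivity),
      Real.sq_sqrt hε.le]⟩
  have hstrip : {q : ℝ × ℝ | f q ≤ ε} ⊆ parabolaStrip ε := fun q hq => by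
    have hx : 0 ≤ q.1 ^ (2 * p) := by rw [pow_mul]; positivity
    simp only [mem_ofPred_eq, hf] at hq
    exact (le_add_of_nonneg_left hx).trans hq
  have hextent (σ : ℝ) (hσ : σ ^ 2 = 1) : (σ * y - P.2) ^ 4 ≤ 64 * ε := by
    have hQ : f (y ^ 2, σ * y) ≤ ε := by
      rw [hf]
      dsimp only
      rw [mul_pow, hσ, one_mul, sub_self, ← pow_mul, show 2 * (2 * p) = 4 * p by ring,
        pow_mul, hy4]
      simpa using mul_pow_le_of_sq_mul_le_one (by omega) (by norm_num) hε.le (by linarith)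
    exact sub_snd_pow_four_le_of_segment_subset_parabolaStrip
      ((hP.segment_subset hQ).trans hstrip)
  -- The two vertical differences differ by `2y`, so `16 · 81 ε ≤ 8 · (64 ε + 64 ε)`.
  nlinarith [hextent 1 (by norm_num), hextent (-1) (by norm_num),
    sub_pow_four_le (1 * y - P.2) (-1 * y - P.2)]
end

section
/- Let p ≥ 3 be a natural number and let f : ℝ² → ℝ be the polynomial function f(x,y) = x^(2p) + (y² − x)². There exists ε₀ > 0 such that for every ε with 0 < ε < ε₀ and every real number x_B with x_B^(2p) + x_B² ≤ ε, the point M = ((ε^(1/(2p)) + x_B)/2, ε^(1/(4p))/2) satisfies f(M) > ε. -/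
/-!
Put `t = ε^(1/(4p))`, so that `ε = t^(4p)`, `ε^(1/(2p)) = t²` and `M = ((t² + x_B)/2, t/2)`.
Then the second term of `f(M)` is `(t²/4 + x_B/2)²`, while `|x_B| ≤ √ε = t^(2p) ≤ t⁴` is negligible
against `t²`; hence `f(M) ≥ t⁴/64`, which beats `ε = t^(4p)` for small `t` because `p ≥ 2`.
-/

open Real

lemma rpow_one_div_four_mul_pow {ε : ℝ} (hε : 0 ≤ ε) {p : ℕ} (hp : p ≠ 0) :
    (ε ^ (1 / (4 * (p : ℝ)))) ^ (4 * p) = ε := by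
  have h := rpow_inv_natCast_pow hε (n := 4 * p) (by omega)
  rwa [one_div, ← Nat.cast_ofNat, ← Nat.cast_mul]

lemma rpow_one_div_two_mul_eq_sq {ε : ℝ} (hε : 0 ≤ ε) (p : ℕ) :
    ε ^ (1 / (2 * (p : ℝ))) = (ε ^ (1 / (4 * (p : ℝ)))) ^ 2 := by
  rw [← rpow_mul_natCast hε]
  ring_nf

lemma pow_four_mul_lt_sq_of_abs_le {p : ℕ} (hp : 2 ≤ p) {t x : ℝ} (ht : 0 < t) (ht' : t < 1 / 4)
    (hx : |x| ≤ t ^ (2 * p)) :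
    t ^ (4 * p) < ((t / 2) ^ 2 - (t ^ 2 + x) / 2) ^ 2 := by
  have ht1 : t ≤ 1 := by linarith
  have ht2 : t ^ 2 < 1 / 16 := by nlinarith
  have hx4 : |x| ≤ t ^ 4 := hx.trans (pow_le_pow_of_le_one ht.le ht1 (by omega))
  have hlin : t ^ 2 / 8 ≤ t ^ 2 / 4 + x / 2 := by nlinarith [neg_abs_le x, pow_pos ht 2]
  calc t ^ (4 * p) ≤ t ^ 8 := pow_le_pow_of_le_one ht.le ht1 (by omega)
    _ = t ^ 4 * (t ^ 2) ^ 2 := by ring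
    _ < t ^ 4 * (1 / 16) ^ 2 := by gcongr
    _ ≤ (t ^ 2 / 8) ^ 2 := by nlinarith [pow_pos ht 4]
    _ ≤ (t ^ 2 / 4 + x / 2) ^ 2 := pow_le_pow_left₀ (by positivity) hlin 2
    _ = ((t / 2) ^ 2 - (t ^ 2 + x) / 2) ^ 2 := by ring

/-- For `p ≥ 3` and `f(x,y) = x^(2p) + (y² − x)²`, there exists `ε₀ > 0` such that
for every `0 < ε < ε₀` and every real `x_B` with `x_B^(2p) + x_B² ≤ ε`, the midpoint
`M = ((ε^(1/(2p)) + x_B)/2, ε^(1/(4p))/2)` satisfies `f(M) > ε`. -/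
theorem midpoint_outside_sublevel (p : ℕ) (hp : 3 ≤ p) (f : ℝ × ℝ → ℝ)
    (hf : ∀ q : ℝ × ℝ, f q = q.1 ^ (2 * p) + (q.2 ^ 2 - q.1) ^ 2) :
    ∃ ε₀ > 0, ∀ ε : ℝ, 0 < ε → ε < ε₀ →
      ∀ xB : ℝ, xB ^ (2 * p) + xB ^ 2 ≤ ε →
        ε < f ((ε ^ (1 / (2 * (p : ℝ))) + xB) / 2, ε ^ (1 / (4 * (p : ℝ))) / 2) := by
  refine ⟨(1 / 4) ^ (4 * p), by positivity, fun ε hε hε₀ xB hxB => ?_⟩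
  set t := ε ^ (1 / (4 * (p : ℝ)))
  have ht : 0 < t := by positivity
  have htε : t ^ (4 * p) = ε := rpow_one_div_four_mul_pow hε.le (by omega)
  have ht_lt : t < 1 / 4 :=
    (pow_lt_pow_iff_left₀ ht.le (by norm_num) (by omega)).1 (htε ▸ hε₀)
  have hxB_sq : xB ^ 2 ≤ (t ^ (2 * p)) ^ 2 := by
    rw [← pow_mul, show 2 * p * 2 = 4 * p by ring, htε]
    linarith [(even_two_mul p).pow_nonneg xB]
  have hxB_abs : |xB| ≤ t ^ (2 * p) := abs_le_of_sq_le_sq hxB_sq (by positivity)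
  rw [hf, rpow_one_div_two_mul_eq_sq hε.le]
  have key := pow_four_mul_lt_sq_of_abs_le (by omega) ht ht_lt hxB_abs
  linarith [(even_two_mul p).pow_nonneg ((t ^ 2 + xB) / 2)]
end

section
/- Let f : ℝ² → ℝ be a polynomial function with f(0,0) = 0 that has a strict local minimum at the origin, i.e. f(p) > 0 for all p ≠ (0,0) in some neighborhood of the origin. Let I ⊆ ℝ be an open interval containing 0 and γ : ℝ → ℝ² a map that is real-analytic at every point of I, with γ(0) = (0,0), γ(t) ≠ (0,0) for all t ∈ I \ {0}, and ∂f/∂y (γ(t)) = 0 for all t ∈ I. Then there exists δ > 0 with [0, δ] ⊆ I such that f ∘ γ is strictly increasing on [0, δ]. -/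
/-!
Along the arc, `g = f ∘ γ` is real-analytic at `0`, vanishes there and is positive just to the
right of `0`. By the isolated zeros principle `g'` either vanishes identically near `0`, which
the mean value theorem forbids, or has no zeros on some `(0, u)`; by Darboux's theorem it then
has constant sign there, and the mean value theorem again makes that sign positive.
-/

open Set Filter Topology

theorem analyticAt_eval_pair {𝕜 : Type*} [NontriviallyNormedField 𝕜]
    (F : MvPolynomial (Fin 2) 𝕜) (q : 𝕜 × 𝕜) :
    AnalyticAt 𝕜 (fun q : 𝕜 × 𝕜 => MvPolynomial.eval ![q.1, q.2] F) q := by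
  apply AnalyticAt.aeval_mvPolynomial
  intro i
  fin_cases i
  · simpa using (ContinuousLinearMap.fst 𝕜 𝕜 𝕜).analyticAt q
  · simpa using (ContinuousLinearMap.snd 𝕜 𝕜 𝕜).analyticAt q

theorem exists_deriv_pos_of_lt {g : ℝ → ℝ} {a b : ℝ} (hab : a < b)
    (hg : ∀ t ∈ Icc a b, DifferentiableAt ℝ g t) (hlt : g a < g b) :
    ∃ ξ ∈ Ioo a b, 0 < deriv g ξ := by
  obtain ⟨ξ, hξ, hslope⟩ := exists_deriv_eq_slope g hab
    (fun t ht => (hg t ht).continuousAt.continuousWithinAt)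
    (fun t ht => (hg t (Ioo_subset_Icc_self ht)).differentiableWithinAt)
  exact ⟨ξ, hξ, hslope ▸ div_pos (sub_pos.2 hlt) (sub_pos.2 hab)⟩

theorem frequently_deriv_pos_nhdsGT {g : ℝ → ℝ} {x : ℝ}
    (hd : ∀ᶠ t in 𝓝 x, DifferentiableAt ℝ g t) (hgt : ∀ᶠ t in 𝓝[>] x, g x < g t) :
    ∃ᶠ t in 𝓝[>] x, 0 < deriv g t := by
  refine frequently_iff.2 fun {U} hU => ?_
  obtain ⟨u, hxu, hu⟩ := mem_nhdsGE_iff_exists_Icc_subset.1 (nhdsWithin_le_nhds hd)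
  obtain ⟨c, hxc, hc⟩ := mem_nhdsGT_iff_exists_Ioo_subset.1 (inter_mem hU hgt)
  set d := min u ((x + c) / 2)
  have hxd : x < d := lt_min hxu (by linarith [mem_Ioi.1 hxc])
  have hdc : d < c := by linarith [min_le_right u ((x + c) / 2), mem_Ioi.1 hxc]
  obtain ⟨ξ, hξ, hpos⟩ := exists_deriv_pos_of_lt hxd
    (fun t ht => hu ⟨ht.1, ht.2.trans (min_le_left _ _)⟩) (hc ⟨hxd, hdc⟩).2
  exact ⟨ξ, (hc ⟨hξ.1, hξ.2.trans hdc⟩).1, hpos⟩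

theorem AnalyticAt.exists_strictMonoOn_Icc {g : ℝ → ℝ} {x : ℝ} (hg : AnalyticAt ℝ g x)
    (hgt : ∀ᶠ t in 𝓝[>] x, g x < g t) : ∃ u > x, StrictMonoOn g (Icc x u) := by
  have hd : ∀ᶠ t in 𝓝 x, DifferentiableAt ℝ g t :=
    hg.eventually_analyticAt.mono fun t ht => ht.differentiableAt
  have hpos := frequently_deriv_pos_nhdsGT hd hgt
  have hne : ∀ᶠ t in 𝓝[>] x, deriv g t ≠ 0 := by
    refine (hg.deriv.eventually_eq_zero_or_eventually_ne_zero.resolve_left fun hzero => ?_)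
      |>.filter_mono (nhdsWithin_mono _ fun t ht => ne_of_gt ht)
    obtain ⟨t, htpos, htzero⟩ := (hpos.and_eventually (nhdsWithin_le_nhds hzero)).exists
    exact htpos.ne' htzero
  obtain ⟨u, hxu, hu⟩ := mem_nhdsGE_iff_exists_Icc_subset.1 (nhdsWithin_le_nhds hd)
  obtain ⟨c, hxc, hc⟩ := mem_nhdsGT_iff_exists_Ioo_subset.1 hne
  set v := min u c
  have hdv : ∀ t ∈ Icc x v, DifferentiableAt ℝ g t :=
    fun t ht => hu ⟨ht.1, ht.2.trans (min_le_left _ _)⟩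
  have hsign := hasDerivWithinAt_forall_lt_or_forall_gt_of_forall_ne (convex_Ioo x v)
    (fun t ht => (hdv t (Ioo_subset_Icc_self ht)).hasDerivAt.hasDerivWithinAt)
    (fun t ht => hc ⟨ht.1, ht.2.trans_le (min_le_right _ _)⟩)
  have hxv : x < v := lt_min hxu hxc
  rcases hsign with hneg | hderiv_pos
  · obtain ⟨t, ht, htv⟩ := (hpos.and_eventually (Ioo_mem_nhdsGT hxv)).exists
    exact absurd (hneg t htv) ht.not_gt
  · refine ⟨v, hxv, strictMonoOn_of_deriv_pos (convex_Icc x v)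
      (fun t ht => (hdv t ht).continuousAt.continuousWithinAt) ?_⟩
    rw [interior_Icc]
    exact hderiv_pos

theorem f_strictly_increasing_on_polar_half_branch_general (f : ℝ × ℝ → ℝ)
    (hpoly : ∃ F : MvPolynomial (Fin 2) ℝ,
      ∀ q : ℝ × ℝ, f q = MvPolynomial.eval ![q.1, q.2] F)
    (hf0 : f (0, 0) = 0)
    (hmin : ∀ᶠ q in nhds ((0, 0) : ℝ × ℝ), q ≠ (0, 0) → 0 < f q)
    (I : Set ℝ) (a b : ℝ) (ha : a < 0) (hb : 0 < b) (hI : I = Set.Ioo a b)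
    (γ : ℝ → ℝ × ℝ) (hγ : ∀ t ∈ I, AnalyticAt ℝ γ t)
    (hγ0 : γ 0 = (0, 0))
    (hγne : ∀ t ∈ I \ {(0 : ℝ)}, γ t ≠ (0, 0)) :
    ∃ δ > 0, Set.Icc 0 δ ⊆ I ∧ StrictMonoOn (f ∘ γ) (Set.Icc 0 δ) := by
  subst hI
  obtain ⟨F, hF⟩ := hpoly
  have h0I : (0 : ℝ) ∈ Ioo a b := ⟨ha, hb⟩
  have hfA : AnalyticAt ℝ f (γ 0) := funext hF ▸ analyticAt_eval_pair F (γ 0)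
  have hgA : AnalyticAt ℝ (f ∘ γ) 0 := hfA.comp (hγ 0 h0I)
  have hgt : ∀ᶠ t in 𝓝[>] 0, (f ∘ γ) 0 < (f ∘ γ) t := by
    have hγt : Tendsto γ (𝓝 0) (𝓝 (0, 0)) := hγ0 ▸ (hγ 0 h0I).continuousAt
    filter_upwards [nhdsWithin_le_nhds ((hγt.eventually hmin).and (Ioo_mem_nhds ha hb)),
      self_mem_nhdsWithin] with t ⟨hpos, htI⟩ (ht : 0 < t)
    simpa [hγ0, hf0] using hpos (hγne t ⟨htI, ht.ne'⟩)
  obtain ⟨u, hu, hmono⟩ := hgA.exists_strictMonoOn_Icc hgt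
  have hsub : Icc 0 (min u (b / 2)) ⊆ Ioo a b :=
    fun t ht => ⟨ha.trans_le ht.1, ht.2.trans_lt ((min_le_right _ _).trans_lt (half_lt_self hb))⟩
  exact ⟨min u (b / 2), lt_min hu (half_pos hb), hsub,
    hmono.mono (Icc_subset_Icc_right (min_le_left _ _))⟩

/-- Let `f : ℝ² → ℝ` be a polynomial function with `f(0,0) = 0` and a strict local
minimum at the origin. If `γ` is an analytic parametrisation on an open interval `I ∋ 0` of a
half-branch through the origin of the polar curve `{∂f/∂y = 0}` (i.e. `γ(0) = (0,0)`,
`γ(t) ≠ (0,0)` for `t ∈ I \ {0}`, and `∂f/∂y (γ t) = 0` on `I`), then `f ∘ γ` is strictly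
increasing on some interval `[0, δ] ⊆ I` with `δ > 0`. -/
theorem f_strictly_increasing_on_polar_half_branch (f : ℝ × ℝ → ℝ)
    (hpoly : ∃ F : MvPolynomial (Fin 2) ℝ,
      ∀ q : ℝ × ℝ, f q = MvPolynomial.eval ![q.1, q.2] F)
    (hf0 : f (0, 0) = 0)
    (hmin : ∀ᶠ q in nhds ((0, 0) : ℝ × ℝ), q ≠ (0, 0) → 0 < f q)
    (I : Set ℝ) (a b : ℝ) (ha : a < 0) (hb : 0 < b) (hI : I = Set.Ioo a b)
    (γ : ℝ → ℝ × ℝ) (hγ : ∀ t ∈ I, AnalyticAt ℝ γ t)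
    (hγ0 : γ 0 = (0, 0))
    (hγne : ∀ t ∈ I \ {(0 : ℝ)}, γ t ≠ (0, 0))
    (hpolar : ∀ t ∈ I, deriv (fun y' : ℝ => f ((γ t).1, y')) (γ t).2 = 0) :
    ∃ δ > 0, Set.Icc 0 δ ⊆ I ∧ StrictMonoOn (f ∘ γ) (Set.Icc 0 δ) :=
  f_strictly_increasing_on_polar_half_branch_general f hpoly hf0 hmin I a b ha hb hI γ hγ hγ0 hγne
end

section
/- Let f : ℝ² → ℝ be a polynomial function with f(0,0) = 0 that has a strict local minimum at the origin, i.e. f(p) > 0 for all p ≠ (0,0) in some neighborhood of the origin. Let I ⊆ ℝ be an open interval containing 0 and γ : ℝ → ℝ² a map that is real-analytic at every point of I, with γ(0) = (0,0), γ(t) ≠ (0,0) for all t ∈ I \ {0}, and ∂f/∂y (γ(t)) = 0 for all t ∈ I. Then there exist δ > 0 with [0, δ] ⊆ I and ε₀ > 0 such that for every ε with 0 < ε < ε₀ there is exactly one t ∈ (0, δ] with f(γ(t)) = ε. -/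
/-- Let `f : ℝ² → ℝ` be a polynomial function with `f(0,0) = 0` and a strict local
minimum at the origin, and let `γ` be an analytic parametrisation on an open interval `I ∋ 0` of
a half-branch through the origin of the polar curve `{∂f/∂y = 0}`. Then there exist `δ > 0` with
`[0, δ] ⊆ I` and `ε₀ > 0` such that for every `0 < ε < ε₀` there is exactly one `t ∈ (0, δ]`
with `f (γ t) = ε`: each small level curve meets the polar half-branch in exactly one point. -/
theorem level_meets_polar_half_branch_once (f : ℝ × ℝ → ℝ)
    (hpoly : ∃ F : MvPolynomial (Fin 2) ℝ,
      ∀ q : ℝ × ℝ, f q = MvPolynomial.eval ![q.1, q.2] F)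
    (hf0 : f (0, 0) = 0)
    (hmin : ∀ᶠ q in nhds ((0, 0) : ℝ × ℝ), q ≠ (0, 0) → 0 < f q)
    (I : Set ℝ) (a b : ℝ) (ha : a < 0) (hb : 0 < b) (hI : I = Set.Ioo a b)
    (γ : ℝ → ℝ × ℝ) (hγ : ∀ t ∈ I, AnalyticAt ℝ γ t)
    (hγ0 : γ 0 = (0, 0))
    (hγne : ∀ t ∈ I \ {(0 : ℝ)}, γ t ≠ (0, 0))
    (hpolar : ∀ t ∈ I, deriv (fun y' : ℝ => f ((γ t).1, y')) (γ t).2 = 0) :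
    ∃ δ > 0, Set.Icc 0 δ ⊆ I ∧
      ∃ ε₀ > 0, ∀ ε : ℝ, 0 < ε → ε < ε₀ →
        ∃! t : ℝ, t ∈ Set.Ioc 0 δ ∧ f (γ t) = ε := by
  obtain ⟨F, hF⟩ := hpoly
  -- f is analytic everywhere
  have hfa : ∀ q : ℝ × ℝ, AnalyticAt ℝ f q := by
    intro q
    have hi : ∀ i : Fin 2, AnalyticAt ℝ (fun x : ℝ × ℝ => ![x.1, x.2] i) q := by
      intro i
      fin_cases i
      · simpa using analyticAt_fst
      · simpa using analyticAt_snd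
    have h := AnalyticAt.aeval_mvPolynomial (𝕜 := ℝ) hi F
    have he : (fun x : ℝ × ℝ => MvPolynomial.aeval ![x.1, x.2] F)
        = fun x : ℝ × ℝ => MvPolynomial.eval ![x.1, x.2] F := by
      funext x
      rw [MvPolynomial.aeval_def, MvPolynomial.eval, MvPolynomial.coe_eval₂Hom,
        Algebra.algebraMap_self]
    rw [he] at h
    have hfe : f = fun x : ℝ × ℝ => MvPolynomial.eval ![x.1, x.2] F := funext hF
    rwa [← hfe] at h
  set g : ℝ → ℝ := fun t => f (γ t) with hg
  have h0I : (0 : ℝ) ∈ I := by rw [hI]; exact ⟨ha, hb⟩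
  have hIopen : IsOpen I := by rw [hI]; exact isOpen_Ioo
  have hgan : AnalyticAt ℝ g 0 := (hfa (γ 0)).comp (hγ 0 h0I)
  have hg0 : g 0 = 0 := by rw [hg]; simp only [hγ0, hf0]
  -- g > 0 on a right punctured neighborhood of 0
  have hposr : ∀ᶠ t in nhdsWithin 0 (Set.Ioi 0), 0 < g t := by
    have hγc : Filter.Tendsto γ (nhds 0) (nhds ((0, 0) : ℝ × ℝ)) := by
      have := (hγ 0 h0I).continuousAt
      rwa [ContinuousAt, hγ0] at this
    have ev1 : ∀ᶠ t in nhds (0 : ℝ), γ t ≠ (0, 0) → 0 < f (γ t) := hγc.eventually hmin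
    have ev2 : ∀ᶠ t in nhds (0 : ℝ), t ∈ I := hIopen.mem_nhds h0I
    filter_upwards [ev1.filter_mono nhdsWithin_le_nhds, ev2.filter_mono nhdsWithin_le_nhds,
      self_mem_nhdsWithin] with t h1 h2 h3
    exact h1 (hγne t ⟨h2, ne_of_gt (Set.mem_Ioi.mp h3)⟩)
  -- the order of g at 0 is a finite natural number n = m + 1
  have hne_top : analyticOrderAt g 0 ≠ ⊤ := by
    intro htop
    rw [analyticOrderAt_eq_top] at htop
    obtain ⟨t, h1, h2⟩ := (hposr.and (htop.filter_mono nhdsWithin_le_nhds)).exists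
    rw [h2] at h1; exact lt_irrefl 0 h1
  lift analyticOrderAt g 0 to ℕ using hne_top with n hn
  obtain ⟨h, hh, hh0, hfac⟩ := (hgan.analyticOrderAt_eq_natCast (n := n)).mp hn.symm
  simp only [sub_zero, smul_eq_mul] at hfac
  have hn0 : n ≠ 0 := by
    intro h0
    apply hh0
    have := hfac.self_of_nhds
    rw [h0, pow_zero, one_mul] at this
    rw [← this, hg0]
  obtain ⟨m, rfl⟩ := Nat.exists_eq_succ_of_ne_zero hn0
  -- h 0 > 0
  have hh0pos : 0 < h 0 := by
    rcases lt_trichotomy (h 0) 0 with hlt | heq | hgt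
    · exfalso
      have hhneg : ∀ᶠ t in nhds (0 : ℝ), h t < 0 :=
        hh.continuousAt.eventually_lt_const hlt
      have : ∀ᶠ t in nhdsWithin 0 (Set.Ioi 0), g t < 0 := by
        filter_upwards [hhneg.filter_mono nhdsWithin_le_nhds,
          hfac.filter_mono nhdsWithin_le_nhds, self_mem_nhdsWithin] with t h1 h2 h3
        rw [h2]
        exact mul_neg_of_pos_of_neg (pow_pos (Set.mem_Ioi.mp h3) _) h1
      obtain ⟨t, h1, h2⟩ := (hposr.and this).exists
      exact absurd (h1.trans h2) (lt_irrefl 0)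
    · exact absurd heq hh0
    · exact hgt
  -- deriv h is continuous at 0
  have hhan_nhds : ∀ᶠ z in nhds (0 : ℝ), AnalyticAt ℝ h z := hh.eventually_analyticAt
  obtain ⟨V, hVsub, hVopen, hV0⟩ : ∃ V : Set ℝ, (∀ z ∈ V, AnalyticAt ℝ h z) ∧ IsOpen V ∧ (0:ℝ) ∈ V := by
    obtain ⟨W, hW, hWsub⟩ := hhan_nhds.exists_mem
    obtain ⟨V, hVW, hVo, hV0⟩ := mem_nhds_iff.mp hW
    exact ⟨V, fun z hz => hWsub z (hVW hz), hVo, hV0⟩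
  have hderivh : AnalyticAt ℝ (deriv h) 0 :=
    (AnalyticOnNhd.deriv (fun z hz => hVsub z hz)) 0 hV0
  -- the auxiliary function φ
  set φ : ℝ → ℝ := fun t => ((m : ℝ) + 1) * h t + t * deriv h t with hφ
  have hφcont : ContinuousAt φ 0 :=
    (continuousAt_const.mul hh.continuousAt).add
      (continuousAt_id.mul hderivh.continuousAt)
  have hφ0 : 0 < φ 0 := by
    have : φ 0 = ((m : ℝ) + 1) * h 0 := by simp [hφ]
    rw [this]
    positivity
  have hφpos : ∀ᶠ t in nhds (0 : ℝ), 0 < φ t :=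
    hφcont.eventually_const_lt hφ0
  -- collect eventual facts and pick an open set U
  have hUev : ∀ᶠ t in nhds (0 : ℝ),
      (g t = t ^ (m + 1) * h t ∧ AnalyticAt ℝ h t) ∧ (0 < φ t ∧ t ∈ I) := by
    filter_upwards [hfac, hVopen.eventually_mem hV0, hφpos, hIopen.mem_nhds h0I] with t h1 h2 h3 h4
    exact ⟨⟨h1, hVsub t h2⟩, h3, h4⟩
  obtain ⟨r, hr, hrsub⟩ := Metric.eventually_nhds_iff.mp hUev
  set δ : ℝ := min (r / 2) 1 with hδ
  have hδpos : 0 < δ := lt_min (by linarith) one_pos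
  have hδr : δ < r := lt_of_le_of_lt (min_le_left _ _) (by linarith)
  have hmem : ∀ t : ℝ, t ∈ Set.Icc 0 δ →
      (g t = t ^ (m + 1) * h t ∧ AnalyticAt ℝ h t) ∧ (0 < φ t ∧ t ∈ I) := by
    intro t ht
    apply hrsub
    rw [Real.dist_eq, sub_zero, abs_of_nonneg ht.1]
    exact lt_of_le_of_lt ht.2 hδr
  have hIccI : Set.Icc 0 δ ⊆ I := fun t ht => ((hmem t ht).2).2
  -- g has derivative t^m * φ t at each t with |t| < r
  have hHasDeriv : ∀ t : ℝ, dist t 0 < r →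
      HasDerivAt g (((m : ℝ) + 1) * t ^ m * h t + t ^ (m + 1) * deriv h t) t := by
    intro t ht
    have hth : AnalyticAt ℝ h t := ((hrsub ht).1).2
    have hF : HasDerivAt (fun s : ℝ => s ^ (m + 1) * h s)
        (((m : ℝ) + 1) * t ^ m * h t + t ^ (m + 1) * deriv h t) t := by
      have h1 : HasDerivAt (fun s : ℝ => s ^ (m + 1)) ((m + 1 : ℕ) * t ^ m) t := by
        simpa using hasDerivAt_pow (m + 1) t
      have h2 : HasDerivAt h (deriv h t) t := hth.differentiableAt.hasDerivAt
      have : HasDerivAt (fun s : ℝ => s ^ (m + 1) * h s) _ t := h1.mul h2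
      convert this using 1
      push_cast
      ring
    apply hF.congr_of_eventuallyEq
    have : ∀ᶠ s in nhds t, dist s 0 < r := by
      have : Metric.ball (0:ℝ) r ∈ nhds t := by
        apply Metric.isOpen_ball.mem_nhds
        simpa [Metric.mem_ball] using ht
      filter_upwards [this] with s hs using hs
    filter_upwards [this] with s hs using ((hrsub hs).1).1
  -- g is continuous on [0, δ]
  have hgcont : ContinuousOn g (Set.Icc 0 δ) := by
    intro t ht
    have hd : dist t 0 < r := by
      rw [Real.dist_eq, sub_zero, abs_of_nonneg ht.1]
      exact lt_of_le_of_lt ht.2 hδr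
    exact ((hHasDeriv t hd).differentiableAt.continuousAt).continuousWithinAt
  -- g is strictly monotone on [0, δ]
  have hsm : StrictMonoOn g (Set.Icc 0 δ) := by
    apply strictMonoOn_of_deriv_pos (convex_Icc 0 δ) hgcont
    intro t ht
    rw [interior_Icc] at ht
    have hd : dist t 0 < r := by
      rw [Real.dist_eq, sub_zero, abs_of_nonneg (le_of_lt ht.1)]
      exact lt_of_lt_of_le (lt_of_lt_of_le ht.2 (le_refl δ)) (le_of_lt hδr)
    rw [(hHasDeriv t hd).deriv]
    have hφt : 0 < φ t := by
      apply ((hrsub hd).2).1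
    have heq : ((m : ℝ) + 1) * t ^ m * h t + t ^ (m + 1) * deriv h t = t ^ m * φ t := by
      rw [hφ]; ring
    rw [heq]
    exact mul_pos (pow_pos ht.1 m) hφt
  -- conclude
  have hgδpos : 0 < g δ := by
    have := hsm (Set.left_mem_Icc.mpr (le_of_lt hδpos)) (Set.right_mem_Icc.mpr (le_of_lt hδpos)) hδpos
    rwa [hg0] at this
  refine ⟨δ, hδpos, hIccI, g δ, hgδpos, ?_⟩
  intro ε hε1 hε2
  have hIVT : Set.Ioo (g 0) (g δ) ⊆ g '' Set.Ioo 0 δ :=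
    intermediate_value_Ioo (le_of_lt hδpos) hgcont
  obtain ⟨t, htmem, htval⟩ := hIVT (by rw [hg0]; exact ⟨hε1, hε2⟩)
  refine ⟨t, ⟨⟨htmem.1, le_of_lt htmem.2⟩, htval⟩, ?_⟩
  rintro t' ⟨ht'mem, ht'val⟩
  apply hsm.injOn
  · exact ⟨le_of_lt ht'mem.1, ht'mem.2⟩
  · exact ⟨le_of_lt htmem.1, le_of_lt htmem.2⟩
  · exact ht'val.trans htval.symm
end

section
/- Let f : ℝ² → ℝ be a polynomial function with f(0,0) = 0 that has a strict local minimum at the origin, i.e. f(p) > 0 for all p ≠ (0,0) in some neighborhood of the origin. Let I ⊆ ℝ be an open interval containing 0 and γ : ℝ → ℝ² a map that is real-analytic at every point of I, with γ(0) = (0,0), γ(t) ≠ (0,0) for all t ∈ I \ {0}, and ∂f/∂y (γ(t)) = 0 for all t ∈ I. Then there exists δ > 0 with [0, δ] ⊆ I such that the function t ↦ (first coordinate of γ(t)) is strictly monotone on [0, δ], i.e. either strictly increasing or strictly decreasing there. -/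
/-!
The first coordinate `x` of `γ` is analytic at `0`, so by the isolated zeros principle either `x'`
vanishes near `0`, or `x'` has no zero on a punctured neighbourhood of `0`. In the second case
Darboux's theorem gives `x'` a constant sign on `(0, δ)`, hence `x` is strictly monotone on
`[0, δ]`. In the first case `x ≡ 0` near `0`: the branch runs along the line `x = 0`, and its
second coordinate sweeps a nondegenerate interval of values `u` with `∂f/∂y (0, u) = 0`. The
derivative of the polynomial `u ↦ f (0, u)` then has infinitely many roots, so this polynomial is
constant, equal to `f (0, 0) = 0`, which contradicts the strict minimum.
-/

open Set Filter Topology Polynomial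

theorem MvPolynomial.exists_polynomial_eval_eq_eval_fin_two {R : Type*} [CommRing R]
    (F : MvPolynomial (Fin 2) R) (c : R) :
    ∃ P : R[X], ∀ u, P.eval u = MvPolynomial.eval ![c, u] F := by
  refine ⟨MvPolynomial.aeval ![Polynomial.C c, Polynomial.X] F, fun u => ?_⟩
  induction F using MvPolynomial.induction_on with
  | C a => simp
  | add p q hp hq => simp [hp, hq]
  | mul_X p i hp => fin_cases i <;> simp [hp]

theorem Polynomial.derivative_ne_zero_of_eval_ne {R : Type*} [CommRing R] [IsDomain R]
    [CharZero R] {P : R[X]} {u v : R} (h : P.eval u ≠ P.eval v) : P.derivative ≠ 0 := by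
  intro hP
  rw [eq_C_of_derivative_eq_zero hP] at h
  simp at h

theorem Polynomial.exists_eval_ne_zero_of_continuousOn {Q : ℝ[X]} (hQ : Q ≠ 0) {y : ℝ → ℝ}
    {a b : ℝ} (hab : a ≤ b) (hy : ContinuousOn y (Icc a b)) (hne : y a ≠ y b) :
    ∃ t ∈ Icc a b, Q.eval (y t) ≠ 0 := by
  by_contra! h
  have hroots : uIcc (y a) (y b) ⊆ {u | Q.IsRoot u} := by
    rw [← uIcc_of_le hab] at hy h
    intro u hu
    obtain ⟨t, ht, rfl⟩ := intermediate_value_uIcc hy hu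
    exact h t ht
  exact (Icc_infinite (min_lt_max.2 hne)).mono hroots (finite_setOfPred_isRoot hQ)

theorem eventuallyEq_const_of_deriv_eventuallyEq_zero {E : Type*} [NormedAddCommGroup E]
    [NormedSpace ℝ E] {f : ℝ → E} {a : ℝ} (hd : ∀ᶠ x in 𝓝 a, DifferentiableAt ℝ f x)
    (h : deriv f =ᶠ[𝓝 a] 0) : f =ᶠ[𝓝 a] fun _ => f a := by
  obtain ⟨ε, hε, hball⟩ := Metric.eventually_nhds_iff_ball.1 (hd.and h)
  filter_upwards [Metric.ball_mem_nhds a hε] with x hx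
  exact Metric.isOpen_ball.is_const_of_deriv_eq_zero (convex_ball a ε).isPreconnected
    (fun z hz => (hball z hz).1.differentiableWithinAt) (fun z hz => (hball z hz).2) hx
    (Metric.mem_ball_self hε)

theorem Convex.strictMonoOn_or_strictAntiOn_of_deriv_ne_zero {D : Set ℝ} (hD : Convex ℝ D)
    {f : ℝ → ℝ} (hc : ContinuousOn f D) (hd : DifferentiableOn ℝ f (interior D))
    (h : ∀ x ∈ interior D, deriv f x ≠ 0) : StrictMonoOn f D ∨ StrictAntiOn f D := by
  have hderiv : ∀ x ∈ interior D, HasDerivWithinAt f (deriv f x) (interior D) x := fun x hx =>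
    ((hd x hx).differentiableAt (isOpen_interior.mem_nhds hx)).hasDerivAt.hasDerivWithinAt
  rcases hasDerivWithinAt_forall_lt_or_forall_gt_of_forall_ne hD.interior hderiv h with hneg | hpos
  · exact .inr (strictAntiOn_of_deriv_neg hD hc hneg)
  · exact .inl (strictMonoOn_of_deriv_pos hD hc hpos)

theorem AnalyticAt.eventuallyEq_const_or_exists_strictMonoOn_or_strictAntiOn {x : ℝ → ℝ}
    {a : ℝ} (hx : AnalyticAt ℝ x a) {s : Set ℝ} (hs : s ∈ 𝓝 a) :
    x =ᶠ[𝓝 a] (fun _ => x a) ∨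
      ∃ δ > a, Icc a δ ⊆ s ∧ (StrictMonoOn x (Icc a δ) ∨ StrictAntiOn x (Icc a δ)) := by
  rcases hx.deriv.eventually_eq_zero_or_eventually_ne_zero with hzero | hne
  · exact .inl (eventuallyEq_const_of_deriv_eventuallyEq_zero
      (hx.eventually_analyticAt.mono fun t ht => ht.differentiableAt) hzero)
  obtain ⟨δ, hδ, hsub⟩ := mem_nhdsGE_iff_exists_Icc_subset.1 (mem_nhdsWithin_of_mem_nhds
    (inter_mem hs (hx.eventually_analyticAt.and (eventually_nhdsWithin_iff.1 hne))))
  refine .inr ⟨δ, hδ, fun t ht => (hsub ht).1, ?_⟩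
  refine (convex_Icc a δ).strictMonoOn_or_strictAntiOn_of_deriv_ne_zero
    (fun t ht => (hsub ht).2.1.continuousAt.continuousWithinAt) ?_ ?_ <;> rw [interior_Icc]
  · exact fun t ht => (hsub (Ioo_subset_Icc_self ht)).2.1.differentiableWithinAt
  · exact fun t ht => (hsub (Ioo_subset_Icc_self ht)).2.2 ht.1.ne'

/-- Let `f : ℝ² → ℝ` be a polynomial function with `f(0,0) = 0` and a strict local
minimum at the origin, and let `γ` be an analytic parametrisation on an open interval `I ∋ 0` of
a half-branch through the origin of the polar curve `{∂f/∂y = 0}`. Then the first coordinate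
`t ↦ (γ t).1` is strictly monotone (strictly increasing or strictly decreasing) on some interval
`[0, δ] ⊆ I` with `δ > 0`. -/
theorem x_strictly_monotone_on_polar_half_branch (f : ℝ × ℝ → ℝ)
    (hpoly : ∃ F : MvPolynomial (Fin 2) ℝ,
      ∀ q : ℝ × ℝ, f q = MvPolynomial.eval ![q.1, q.2] F)
    (hf0 : f (0, 0) = 0)
    (hmin : ∀ᶠ q in nhds ((0, 0) : ℝ × ℝ), q ≠ (0, 0) → 0 < f q)
    (I : Set ℝ) (a b : ℝ) (ha : a < 0) (hb : 0 < b) (hI : I = Set.Ioo a b)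
    (γ : ℝ → ℝ × ℝ) (hγ : ∀ t ∈ I, AnalyticAt ℝ γ t)
    (hγ0 : γ 0 = (0, 0))
    (hγne : ∀ t ∈ I \ {(0 : ℝ)}, γ t ≠ (0, 0))
    (hpolar : ∀ t ∈ I, deriv (fun y' : ℝ => f ((γ t).1, y')) (γ t).2 = 0) :
    ∃ δ > 0, Set.Icc 0 δ ⊆ I ∧
      (StrictMonoOn (fun t => (γ t).1) (Set.Icc 0 δ) ∨
        StrictAntiOn (fun t => (γ t).1) (Set.Icc 0 δ)) := by
  obtain ⟨F, hF⟩ := hpoly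
  obtain ⟨P, hP⟩ := F.exists_polynomial_eval_eq_eval_fin_two 0
  have hslice : ∀ u, f (0, u) = P.eval u := fun u => (hF _).trans (hP u).symm
  have hP' : P.derivative ≠ 0 := by
    have hvert : ∀ᶠ u in 𝓝 (0 : ℝ), u ≠ 0 → 0 < f (0, u) :=
      ((continuous_const.prodMk continuous_id).tendsto' 0 (0, 0) rfl).eventually hmin |>.mono
        fun u hu hu0 => hu (by simpa using hu0)
    obtain ⟨u, hu⟩ :=
      (eventually_nhdsWithin_iff.2 hvert : ∀ᶠ u in 𝓝[≠] (0 : ℝ), 0 < f (0, u)).exists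
    refine derivative_ne_zero_of_eval_ne (u := u) (v := 0) ?_
    rw [← hslice, ← hslice, hf0]
    exact hu.ne'
  have hI0 : I ∈ 𝓝 (0 : ℝ) := hI ▸ Ioo_mem_nhds ha hb
  have hx : AnalyticAt ℝ (fun t => (γ t).1) 0 := analyticAt_fst.comp (hγ 0 (mem_of_mem_nhds hI0))
  refine (hx.eventuallyEq_const_or_exists_strictMonoOn_or_strictAntiOn hI0).resolve_left ?_
  intro hvertical
  obtain ⟨δ, hδ, hsub⟩ := mem_nhdsGE_iff_exists_Icc_subset.1
    (mem_nhdsWithin_of_mem_nhds (inter_mem hI0 hvertical))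
  have hx0 : ∀ t ∈ Icc 0 δ, (γ t).1 = 0 := fun t ht => ((hsub ht).2).trans (by simp [hγ0])
  have hy : ContinuousOn (fun t => (γ t).2) (Icc 0 δ) := fun t ht =>
    (analyticAt_snd.comp (hγ t (hsub ht).1)).continuousAt.continuousWithinAt
  have hyδ : (γ 0).2 ≠ (γ δ).2 := fun h =>
    hγne δ ⟨(hsub ⟨hδ.le, le_rfl⟩).1, hδ.ne'⟩
      (Prod.ext (hx0 δ ⟨hδ.le, le_rfl⟩) (by simp [← h, hγ0]))
  obtain ⟨t, ht, hcrit⟩ := exists_eval_ne_zero_of_continuousOn hP' hδ.le hy hyδ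
  have hcrit' := hpolar t (hsub ht).1
  simp only [hx0 t ht, hslice, Polynomial.deriv] at hcrit'
  exact hcrit hcrit'
end

section
/- Let f : ℝ² → ℝ be a polynomial function with f(0,0) = 0 that has a strict local minimum at the origin, i.e. f(p) > 0 for all p ≠ (0,0) in some neighborhood of the origin. Let I ⊆ ℝ be an open interval containing 0 and γ : ℝ → ℝ² a map that is real-analytic at every point of I, with γ(0) = (0,0), γ(t) ≠ (0,0) for all t ∈ I \ {0}, and ∂f/∂y (γ(t)) = 0 for all t ∈ I. Then there exists δ > 0 with [0, δ] ⊆ I such that the function t ↦ ‖γ(t)‖² (the square of the Euclidean distance from γ(t) to the origin) is strictly monotone on [0, δ]. -/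
/-- Let `f : ℝ² → ℝ` be a polynomial function with `f(0,0) = 0` and a strict local
minimum at the origin, and let `γ` be an analytic parametrisation on an open interval `I ∋ 0` of
a half-branch through the origin of the polar curve `{∂f/∂y = 0}`. Then the square of the
Euclidean distance from `γ t` to the origin, `t ↦ (γ t).1² + (γ t).2²` (which is `‖γ t‖²` for
the Euclidean norm), is strictly monotone on some interval `[0, δ] ⊆ I` with `δ > 0`. -/
theorem sq_dist_strictly_monotone_on_polar_half_branch (f : ℝ × ℝ → ℝ)
    (hpoly : ∃ F : MvPolynomial (Fin 2) ℝ,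
      ∀ q : ℝ × ℝ, f q = MvPolynomial.eval ![q.1, q.2] F)
    (hf0 : f (0, 0) = 0)
    (hmin : ∀ᶠ q in nhds ((0, 0) : ℝ × ℝ), q ≠ (0, 0) → 0 < f q)
    (I : Set ℝ) (a b : ℝ) (ha : a < 0) (hb : 0 < b) (hI : I = Set.Ioo a b)
    (γ : ℝ → ℝ × ℝ) (hγ : ∀ t ∈ I, AnalyticAt ℝ γ t)
    (hγ0 : γ 0 = (0, 0))
    (hγne : ∀ t ∈ I \ {(0 : ℝ)}, γ t ≠ (0, 0))
    (hpolar : ∀ t ∈ I, deriv (fun y' : ℝ => f ((γ t).1, y')) (γ t).2 = 0) :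
    ∃ δ > 0, Set.Icc 0 δ ⊆ I ∧
      (StrictMonoOn (fun t => (γ t).1 ^ 2 + (γ t).2 ^ 2) (Set.Icc 0 δ) ∨
        StrictAntiOn (fun t => (γ t).1 ^ 2 + (γ t).2 ^ 2) (Set.Icc 0 δ)) := by
  set g : ℝ → ℝ := fun t => (γ t).1 ^ 2 + (γ t).2 ^ 2 with hg_def
  have hIopen : IsOpen I := by rw [hI]; exact isOpen_Ioo
  have h0I : (0 : ℝ) ∈ I := by rw [hI]; exact ⟨ha, hb⟩
  -- g analytic on I
  have hg : ∀ t ∈ I, AnalyticAt ℝ g t := by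
    intro t ht
    have h1 : AnalyticAt ℝ (fun t => (γ t).1) t := analyticAt_fst.comp (hγ t ht)
    have h2 : AnalyticAt ℝ (fun t => (γ t).2) t := analyticAt_snd.comp (hγ t ht)
    exact (h1.pow 2).add (h2.pow 2)
  have hgon : AnalyticOnNhd ℝ g I := hg
  have hg' : AnalyticOnNhd ℝ (deriv g) I := hgon.deriv
  -- g t > 0 for t ∈ I \ {0}
  have hgpos : ∀ t ∈ I, t ≠ 0 → 0 < g t := by
    intro t ht htne
    have hne := hγne t ⟨ht, htne⟩
    have : (γ t).1 ≠ 0 ∨ (γ t).2 ≠ 0 := by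
      by_contra h
      push_neg at h
      exact hne (Prod.ext h.1 h.2)
    show 0 < (γ t).1 ^ 2 + (γ t).2 ^ 2
    rcases this with h | h
    · have h1 : 0 < (γ t).1 ^ 2 := by positivity
      nlinarith [sq_nonneg (γ t).2]
    · have h1 : 0 < (γ t).2 ^ 2 := by positivity
      nlinarith [sq_nonneg (γ t).1]
  have hg0 : g 0 = 0 := by simp [hg_def, hγ0]
  -- dichotomy on deriv g at 0
  rcases (hg' 0 h0I).eventually_eq_zero_or_eventually_ne_zero with hcase | hcase
  · -- deriv g ≡ 0 near 0 : contradiction via MVT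
    exfalso
    rcases Metric.eventually_nhds_iff.1 hcase with ⟨ε, hε, hball⟩
    set δ := min (ε / 2) (b / 2) with hδ
    have hδpos : 0 < δ := lt_min (by linarith) (by linarith)
    have hδI : Set.Icc (0:ℝ) δ ⊆ I := by
      rw [hI]
      intro x hx
      constructor
      · linarith [hx.1]
      · have : x ≤ b / 2 := le_trans hx.2 (min_le_right _ _)
        linarith
    have hcont : ContinuousOn g (Set.Icc 0 δ) := fun x hx => ((hg x (hδI hx)).continuousAt).continuousWithinAt
    have hdiff : DifferentiableOn ℝ g (Set.Ioo 0 δ) := fun x hx =>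
      ((hg x (hδI ⟨le_of_lt hx.1, le_of_lt hx.2⟩)).differentiableAt).differentiableWithinAt
    obtain ⟨c, hc, hceq⟩ := exists_deriv_eq_slope g hδpos hcont hdiff
    have hc0 : deriv g c = 0 := by
      apply hball
      have : c < ε / 2 := lt_of_lt_of_le hc.2 (min_le_left _ _)
      rw [Real.dist_eq, sub_zero, abs_of_pos hc.1]
      linarith
    rw [hc0, hg0] at hceq
    have hgδ : 0 < g δ := hgpos δ (hδI ⟨le_of_lt hδpos, le_refl _⟩) (ne_of_gt hδpos)
    have : g δ = 0 := by
      field_simp at hceq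
      simp only [sub_zero] at hceq
      rcases div_eq_zero_iff.1 hceq.symm with h | h
      · exact h
      · linarith
    linarith
  · -- deriv g ≠ 0 on a punctured neighborhood
    rcases Metric.eventually_nhds_iff.1 (eventually_nhdsWithin_iff.1 hcase) with ⟨ε, hε, hball⟩
    set δ := min (ε / 2) (b / 2) with hδ
    have hδpos : 0 < δ := lt_min (by linarith) (by linarith)
    have hδI : Set.Icc (0:ℝ) δ ⊆ I := by
      rw [hI]
      intro x hx
      exact ⟨by linarith [hx.1], by linarith [le_trans hx.2 (min_le_right _ _)]⟩
    have hne' : ∀ t ∈ Set.Ioo (0:ℝ) δ, deriv g t ≠ 0 := by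
      intro t ht
      have hd : dist t 0 < ε := by
        rw [Real.dist_eq, sub_zero, abs_of_pos ht.1]
        have : t < ε / 2 := lt_of_lt_of_le ht.2 (min_le_left _ _)
        linarith
      exact hball hd (by simpa using ne_of_gt ht.1)
    have hcont : ContinuousOn g (Set.Icc 0 δ) := fun x hx => ((hg x (hδI hx)).continuousAt).continuousWithinAt
    have hderivcont : ContinuousOn (deriv g) (Set.Ioo 0 δ) := fun x hx =>
      ((hg' x (hδI ⟨le_of_lt hx.1, le_of_lt hx.2⟩)).continuousAt).continuousWithinAt
    have hint : interior (Set.Icc (0:ℝ) δ) = Set.Ioo 0 δ := interior_Icc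
    refine ⟨δ, hδpos, hδI, ?_⟩
    by_cases hpos : ∀ t ∈ Set.Ioo (0:ℝ) δ, 0 < deriv g t
    · left
      apply strictMonoOn_of_deriv_pos (convex_Icc 0 δ) hcont
      intro x hx
      rw [hint] at hx
      exact hpos x hx
    · right
      push_neg at hpos
      obtain ⟨t₁, ht₁, ht₁le⟩ := hpos
      have ht₁neg : deriv g t₁ < 0 := lt_of_le_of_ne ht₁le (hne' t₁ ht₁)
      have hneg : ∀ t ∈ Set.Ioo (0:ℝ) δ, deriv g t < 0 := by
        intro t ht
        rcases lt_or_ge (deriv g t) 0 with h | h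
        · exact h
        · exfalso
          have hsub : Set.uIcc t₁ t ⊆ Set.Ioo 0 δ := by
            exact Set.ordConnected_Ioo.uIcc_subset ht₁ ht
          have hcont' : ContinuousOn (deriv g) (Set.uIcc t₁ t) := hderivcont.mono hsub
          have h0mem : (0:ℝ) ∈ Set.uIcc (deriv g t₁) (deriv g t) :=
            Set.mem_uIcc.2 (Or.inl ⟨le_of_lt ht₁neg, h⟩)
          obtain ⟨c, hc, hceq⟩ := intermediate_value_uIcc hcont' h0mem
          exact hne' c (hsub hc) hceq
      apply strictAntiOn_of_deriv_neg (convex_Icc 0 δ) hcont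
      intro x hx
      rw [hint] at hx
      exact hneg x hx
end

section
/- Let F : ℝ² → ℝ be a nonconstant polynomial function, let Z = F⁻¹({0}) be its zero set, and let C be a connected component of Z that is nonempty, compact, and smooth in the sense that the gradient ∇F(p) ≠ 0 for every p ∈ C. Let D := C ∪ {p ∈ ℝ² \ C : the connected component of p in ℝ² \ C is a bounded set} (the topological disk bounded by the curve C). Define the relation ∼ on ℝ² by: p ∼ q if and only if p = q, or (p ∈ D, q ∈ D, p and q have the same first coordinate x₀, and q belongs to the connected component of p in the set D ∩ ({x₀} × ℝ)). Then ∼ is an equivalence relation, and the quotient topological space ℝ²/∼ is homeomorphic to ℝ². -/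
open Set MeasureTheory Polynomial Bornology


lemma poly_line (P : MvPolynomial (Fin 2) ℝ) (x : ℝ) :
    ∃ Q : Polynomial ℝ, ∀ y : ℝ, Polynomial.eval y Q = MvPolynomial.eval ![x, y] P := by
  refine ⟨MvPolynomial.eval₂ (Polynomial.C : ℝ →+* Polynomial ℝ)
    (fun i => if i = 0 then Polynomial.C x else Polynomial.X) P, fun y => ?_⟩
  have := MvPolynomial.eval₂_comp_left (Polynomial.evalRingHom y)
    (Polynomial.C : ℝ →+* Polynomial ℝ)
    (fun i => if i = 0 then Polynomial.C x else Polynomial.X) P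
  simp only [Polynomial.coe_evalRingHom] at this
  rw [this]
  congr 1
  · ext r; simp
  · funext i
    fin_cases i <;> simp

lemma fiber_null (F : ℝ × ℝ → ℝ)
    (hpoly : ∃ P : MvPolynomial (Fin 2) ℝ,
      ∀ q : ℝ × ℝ, F q = MvPolynomial.eval ![q.1, q.2] P)
    (C : Set (ℝ × ℝ))
    (hCcc : ∃ p ∈ F ⁻¹' {0}, C = connectedComponentIn (F ⁻¹' {0}) p)
    (hCcpt : IsCompact C) (x : ℝ) :
    volume {t : ℝ | (x, t) ∈ C} = 0 := by
  obtain ⟨P, hP⟩ := hpoly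
  obtain ⟨p, hp, hC⟩ := hCcc
  have hCZ : C ⊆ F ⁻¹' {0} := hC ▸ connectedComponentIn_subset _ _
  obtain ⟨Q, hQ⟩ := poly_line P x
  rcases eq_or_ne Q 0 with hQ0 | hQ0
  · -- the whole vertical line is in the zero set
    rcases eq_empty_or_nonempty {t : ℝ | (x, t) ∈ C} with he | ⟨t0, ht0⟩
    · simp [he]
    · exfalso
      have hline : ∀ y : ℝ, F (x, y) = 0 := by
        intro y
        rw [hP, ← hQ]
        simp [hQ0]
      set L : Set (ℝ × ℝ) := (fun t : ℝ => (x, t)) '' univ with hL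
      have hLconn : IsPreconnected L :=
        (isPreconnected_univ).image _ (Continuous.continuousOn (by fun_prop))
      have hLZ : L ⊆ F ⁻¹' {0} := by
        rintro - ⟨t, -, rfl⟩; exact hline t
      have hmem : (x, t0) ∈ L := ⟨t0, mem_univ _, rfl⟩
      have hCx : C = connectedComponentIn (F ⁻¹' {0}) (x, t0) :=
        hC.trans (connectedComponentIn_eq (hC ▸ ht0))
      have hLC : L ⊆ C := by
        rw [hCx]
        exact hLconn.subset_connectedComponentIn hmem hLZ
      obtain ⟨R, hR⟩ := (Metric.isBounded_iff_subset_closedBall 0).mp hCcpt.isBounded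
      have h1 : (x, |R| + 1) ∈ C := hLC ⟨|R| + 1, mem_univ _, rfl⟩
      have h2 := hR h1
      rw [Metric.mem_closedBall, Prod.dist_eq] at h2
      have : dist (|R| + 1) (0:ℝ) ≤ R := le_trans (le_max_right _ _) h2
      rw [Real.dist_eq, sub_zero] at this
      have : |R| + 1 ≤ R := le_trans (le_abs_self _) this
      linarith [le_abs_self R, abs_nonneg R]
  · refine measure_mono_null (fun t ht => ?_) ((Q.finite_setOf_isRoot hQ0).measure_zero volume)
    have : F (x, t) = 0 := hCZ ht
    rw [hP] at this
    simpa [Polynomial.IsRoot, hQ t] using this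


variable {C D : Set (ℝ × ℝ)}

lemma compl_closedBall_connected {R : ℝ} (hR : 0 ≤ R) :
    IsPreconnected ((Metric.closedBall (0 : ℝ × ℝ) R)ᶜ) := by
  have hrank : 1 < Module.rank ℝ (ℝ × ℝ) := by
    rw [rank_prod', Module.rank_self]
    exact_mod_cast one_lt_two (α := ℕ)
  have hs : IsConnected ((Metric.sphere (0 : ℝ × ℝ) 1) ×ˢ (Ioi R)) :=
    (isConnected_sphere hrank 0 zero_le_one).prod
      ⟨⟨R + 1, by simp⟩, isPreconnected_Ioi⟩
  have himg : IsConnected ((fun q : (ℝ × ℝ) × ℝ => q.2 • q.1) ''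
      ((Metric.sphere (0 : ℝ × ℝ) 1) ×ˢ (Ioi R))) :=
    hs.image _ (Continuous.continuousOn (by fun_prop))
  have heq : (fun q : (ℝ × ℝ) × ℝ => q.2 • q.1) ''
      ((Metric.sphere (0 : ℝ × ℝ) 1) ×ˢ (Ioi R)) = (Metric.closedBall (0 : ℝ × ℝ) R)ᶜ := by
    ext p
    simp only [mem_image, mem_prod, Metric.mem_sphere, mem_Ioi, mem_compl_iff,
      Metric.mem_closedBall, dist_zero_right, not_le]
    constructor
    · rintro ⟨⟨u, t⟩, ⟨hu, ht⟩, rfl⟩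
      simp only at hu ht ⊢
      rw [norm_smul, hu, mul_one, Real.norm_eq_abs, abs_of_pos (lt_of_le_of_lt hR ht)]
      exact ht
    · intro hp
      have hppos : (0:ℝ) < ‖p‖ := lt_of_le_of_lt hR hp
      have hpne : ‖p‖ ≠ 0 := ne_of_gt hppos
      refine ⟨(‖p‖⁻¹ • p, ‖p‖), ⟨?_, hp⟩, ?_⟩
      · simp only
        rw [norm_smul, Real.norm_eq_abs, abs_inv, abs_of_nonneg (norm_nonneg _),
          inv_mul_cancel₀ hpne]
      · simp [smul_smul, mul_inv_cancel₀ hpne]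
  exact heq ▸ himg.isPreconnected

lemma D_facts (hCcpt : IsCompact C)
    (hD : D = C ∪ {p : ℝ × ℝ | p ∉ C ∧ IsBounded (connectedComponentIn Cᶜ p)}) :
    IsCompact D ∧ frontier D ⊆ C := by
  have hCcl : IsClosed C := hCcpt.isClosed
  have hCo : IsOpen Cᶜ := hCcl.isOpen_compl
  -- D is closed
  have hDc : IsOpen Dᶜ := by
    rw [isOpen_iff_mem_nhds]
    intro p hp
    rw [mem_compl_iff, hD] at hp
    have hpC : p ∉ C := fun h => hp (Or.inl h)
    have hpB' : ¬ IsBounded (connectedComponentIn Cᶜ p) := fun h => hp (Or.inr ⟨hpC, h⟩)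
    have hopen : IsOpen (connectedComponentIn Cᶜ p) := hCo.connectedComponentIn
    have hmem : connectedComponentIn Cᶜ p ∈ nhds p :=
      hopen.mem_nhds (mem_connectedComponentIn hpC)
    filter_upwards [hmem] with q hq
    rw [mem_compl_iff, hD]
    rintro (hqC | ⟨-, hqB⟩)
    · exact (connectedComponentIn_subset _ _ hq) hqC
    · rw [← connectedComponentIn_eq hq] at hqB
      exact hpB' hqB
  have hDcl : IsClosed D := by rw [← compl_compl D]; exact hDc.isClosed_compl
  -- D is bounded
  obtain ⟨R0, hR0⟩ := (Metric.isBounded_iff_subset_closedBall 0).mp hCcpt.isBounded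
  set R := max R0 0 with hRdef
  have hCR : C ⊆ Metric.closedBall 0 R :=
    hR0.trans (Metric.closedBall_subset_closedBall (le_max_left _ _))
  have hDR : D ⊆ Metric.closedBall 0 R := by
    intro p hp
    by_contra hpR
    rw [hD] at hp
    rcases hp with hp | ⟨hpC, hpB⟩
    · exact hpR (hCR hp)
    · have hW : (Metric.closedBall (0:ℝ×ℝ) R)ᶜ ⊆ Cᶜ := compl_subset_compl.mpr hCR
      have hWconn := compl_closedBall_connected (le_max_right R0 0)
      have hWsub : (Metric.closedBall (0:ℝ×ℝ) R)ᶜ ⊆ connectedComponentIn Cᶜ p :=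
        hWconn.subset_connectedComponentIn hpR hW
      have : IsBounded ((Metric.closedBall (0:ℝ×ℝ) R)ᶜ) := hpB.subset hWsub
      have huniv : IsBounded (univ : Set (ℝ × ℝ)) := by
        have := this.union (Metric.isBounded_closedBall (x := (0:ℝ×ℝ)) (r := R))
        rwa [compl_union_self] at this
      obtain ⟨r, hr⟩ := (Metric.isBounded_iff_subset_closedBall 0).mp huniv
      have hmem := hr (mem_univ ((max r 0 + 1, 0) : ℝ × ℝ))
      rw [Metric.mem_closedBall, Prod.dist_eq] at hmem
      have h1 : dist (max r 0 + 1) (0:ℝ) ≤ r := le_trans (le_max_left _ _) hmem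
      rw [Real.dist_eq, sub_zero, abs_of_pos (by positivity)] at h1
      have := le_max_left r 0
      linarith
  have hDcpt : IsCompact D := Metric.isCompact_of_isClosed_isBounded hDcl
    ((Metric.isBounded_closedBall).subset hDR)
  -- frontier
  have hfr : frontier D ⊆ C := by
    have hsub : D \ C ⊆ interior D := by
      intro p hp
      have hpc : p ∈ Cᶜ := hp.2
      have hopen : IsOpen (connectedComponentIn Cᶜ p) := hCo.connectedComponentIn
      have hpB : IsBounded (connectedComponentIn Cᶜ p) := by
        have := hp.1
        rw [hD] at this
        rcases this with h | h
        · exact absurd h hp.2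
        · exact h.2
      refine mem_interior.mpr ⟨connectedComponentIn Cᶜ p, ?_, hopen,
        mem_connectedComponentIn hpc⟩
      intro q hq
      rw [hD]
      by_cases hqC : q ∈ C
      · exact Or.inl hqC
      · refine Or.inr ⟨hqC, ?_⟩
        rw [← connectedComponentIn_eq hq]
        exact hpB
    intro p hp
    rw [hDcl.frontier_eq] at hp
    by_contra hpC
    exact hp.2 (hsub ⟨hp.1, hpC⟩)
  exact ⟨hDcpt, hfr⟩



/-- Upper semicontinuity of fiber measure for a compact set. -/
lemma usc_fiber (K : Set (ℝ × ℝ)) (hK : IsCompact K) (x0 y0 : ℝ) {ε : ℝ} (hε : 0 < ε) :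
    ∃ δ > 0, ∀ x y : ℝ, dist x x0 < δ → dist y y0 < δ →
      volume {t : ℝ | (x, t) ∈ K ∧ t ≤ y} ≤
        volume {t : ℝ | (x0, t) ∈ K ∧ t ≤ y0} + ENNReal.ofReal ε := by
  set S : Set ℝ := {t : ℝ | (x0, t) ∈ K ∧ t ≤ y0} with hS
  -- S has finite measure
  obtain ⟨R, hR⟩ := (Metric.isBounded_iff_subset_closedBall 0).mp hK.isBounded
  have hfib : ∀ x : ℝ, {t : ℝ | (x, t) ∈ K} ⊆ Icc (-R) R := by
    intro x t ht
    have := hR ht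
    rw [Metric.mem_closedBall, Prod.dist_eq] at this
    have h2 : dist t (0:ℝ) ≤ R := le_trans (le_max_right _ _) this
    rw [Real.dist_eq, sub_zero] at h2
    exact abs_le.mp h2
  have hSfin : volume S ≠ ⊤ := by
    refine ne_top_of_le_ne_top ?_ (measure_mono (fun t ht => hfib x0 ht.1))
    simp [Real.volume_Icc]
  -- outer regular open set
  have hlt : volume S < volume S + ENNReal.ofReal (ε/2) := by
    refine ENNReal.lt_add_right hSfin ?_
    simp [ENNReal.ofReal_eq_zero, not_le, half_pos hε]
  obtain ⟨U, hSU, hUopen, hUlt⟩ := S.exists_isOpen_lt_of_lt _ hlt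
  -- compactness argument: fibers near x0 below y0 are inside U
  set A : Set (ℝ × ℝ) := K ∩ {p : ℝ × ℝ | p.2 ≤ y0 ∧ p.2 ∉ U} with hA
  have hAcl : IsCompact A := by
    refine hK.inter_right ?_
    have h1 : IsClosed {p : ℝ × ℝ | p.2 ≤ y0} := isClosed_le (by fun_prop) (by fun_prop)
    have h2 : IsClosed {p : ℝ × ℝ | p.2 ∉ U} := (hUopen.preimage (continuous_snd)).isClosed_compl
    exact (h1.inter h2).mono (by intro p hp; exact hp)
  have hx0 : x0 ∉ Prod.fst '' A := by
    rintro ⟨p, ⟨hpK, hpy, hpU⟩, rfl⟩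
    exact hpU (hSU ⟨hpK, hpy⟩)
  have hclosed : IsClosed (Prod.fst '' A) := (hAcl.image continuous_fst).isClosed
  obtain ⟨δ1, hδ1pos, hδ1⟩ := Metric.isOpen_iff.mp hclosed.isOpen_compl x0 hx0
  refine ⟨min δ1 (min (ε/2) 1), by positivity, fun x y hx hy => ?_⟩
  have hxA : x ∉ Prod.fst '' A := hδ1 (lt_of_lt_of_le hx (min_le_left _ _))
  have hsub : {t : ℝ | (x, t) ∈ K ∧ t ≤ y0} ⊆ U := by
    intro t ⟨htK, hty⟩
    by_contra htU
    exact hxA ⟨(x, t), ⟨htK, hty, htU⟩, rfl⟩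
  have hsplit : {t : ℝ | (x, t) ∈ K ∧ t ≤ y} ⊆ {t : ℝ | (x, t) ∈ K ∧ t ≤ y0} ∪ Ioc y0 y := by
    intro t ⟨htK, hty⟩
    rcases le_or_gt t y0 with h | h
    · exact Or.inl ⟨htK, h⟩
    · exact Or.inr ⟨h, hty⟩
  calc volume {t : ℝ | (x, t) ∈ K ∧ t ≤ y}
      ≤ volume ({t : ℝ | (x, t) ∈ K ∧ t ≤ y0} ∪ Ioc y0 y) := measure_mono hsplit
    _ ≤ volume {t : ℝ | (x, t) ∈ K ∧ t ≤ y0} + volume (Ioc y0 y) := measure_union_le _ _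
    _ ≤ volume U + ENNReal.ofReal (ε/2) := by
        refine add_le_add (measure_mono hsub) ?_
        rw [Real.volume_Ioc]
        refine ENNReal.ofReal_le_ofReal ?_
        have : y - y0 ≤ |y - y0| := le_abs_self _
        have h2 : |y - y0| < ε/2 := lt_of_lt_of_le (by rwa [Real.dist_eq] at hy)
          (le_trans (min_le_right _ _) (min_le_left _ _))
        linarith
    _ ≤ (volume S + ENNReal.ofReal (ε/2)) + ENNReal.ofReal (ε/2) :=
        add_le_add hUlt.le le_rfl
    _ = volume S + ENNReal.ofReal ε := by
        rw [add_assoc, ← ENNReal.ofReal_add (by positivity) (by positivity)]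
        norm_num

/-- Lower semicontinuity of fiber measure for an open set. -/
lemma lsc_fiber (U : Set (ℝ × ℝ)) (hU : IsOpen U) (x0 y0 : ℝ) {ε : ℝ} (hε : 0 < ε)
    (hfin : volume {t : ℝ | (x0, t) ∈ U ∧ t < y0} ≠ ⊤) :
    ∃ δ > 0, ∀ x y : ℝ, dist x x0 < δ → dist y y0 < δ →
      volume {t : ℝ | (x0, t) ∈ U ∧ t < y0} ≤
        volume {t : ℝ | (x, t) ∈ U ∧ t < y} + ENNReal.ofReal ε := by
  set m0 := volume {t : ℝ | (x0, t) ∈ U ∧ t < y0} with hm0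
  rcases le_or_gt m0 (ENNReal.ofReal ε) with hle | hgt
  · exact ⟨1, one_pos, fun x y _ _ => le_trans hle le_add_self⟩
  -- inner regularity
  have hopen : IsOpen {t : ℝ | (x0, t) ∈ U ∧ t < y0} := by
    refine IsOpen.inter ?_ isOpen_Iio
    exact hU.preimage (by fun_prop)
  have hm0pos : m0 ≠ 0 := by
    intro h
    rw [h] at hgt
    exact absurd hgt (by simp)
  have hgt' : m0 - ENNReal.ofReal ε < m0 :=
    ENNReal.sub_lt_self hfin hm0pos (by simp [ENNReal.ofReal_eq_zero, not_le, hε])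
  obtain ⟨Kc, hKsub, hKcpt, hKgt⟩ := hopen.exists_lt_isCompact hgt'
  rcases Kc.eq_empty_or_nonempty with rfl | hKne
  · rw [measure_empty] at hKgt
    exact absurd hKgt (by simp)
  -- sup of K
  have hbdd : BddAbove Kc := hKcpt.bddAbove
  set y1 := sSup Kc with hy1
  have hy1K : y1 ∈ Kc := hKcpt.sSup_mem hKne
  have hy1lt : y1 < y0 := (hKsub hy1K).2
  -- tube lemma
  have htube : ({x0} : Set ℝ) ×ˢ Kc ⊆ U := by
    rintro ⟨a, t⟩ ⟨ha, ht⟩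
    rw [mem_singleton_iff] at ha
    subst ha
    exact (hKsub ht).1
  obtain ⟨u, v, huo, hvo, hxu, hKv, huv⟩ :=
    generalized_tube_lemma isCompact_singleton hKcpt hU htube
  obtain ⟨δ1, hδ1pos, hδ1⟩ := Metric.isOpen_iff.mp huo x0 (hxu rfl)
  refine ⟨min δ1 (y0 - y1), by simp [hδ1pos]; linarith, fun x y hx hy => ?_⟩
  have hxu' : x ∈ u := hδ1 (lt_of_lt_of_le hx (min_le_left _ _))
  have hKsub' : Kc ⊆ {t : ℝ | (x, t) ∈ U ∧ t < y} := by
    intro t ht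
    refine ⟨huv ⟨hxu', hKv ht⟩, ?_⟩
    have h1 : t ≤ y1 := le_csSup hbdd ht
    have h2 : |y - y0| < y0 - y1 := lt_of_lt_of_le (by rwa [Real.dist_eq] at hy)
      (min_le_right _ _)
    have := abs_lt.mp h2
    linarith
  calc m0 ≤ volume Kc + ENNReal.ofReal ε := by
        refine le_trans ?_ (add_le_add hKgt.le le_rfl)
        rw [tsub_add_cancel_of_le hgt.le]
    _ ≤ volume {t : ℝ | (x, t) ∈ U ∧ t < y} + ENNReal.ofReal ε :=
        add_le_add (measure_mono hKsub') le_rfl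

section aux
variable (D : Set (ℝ × ℝ))

/-- measure of the part of the vertical fiber of `D` over `x` lying below `y` -/
noncomputable def mfib (x y : ℝ) : ENNReal := volume {t : ℝ | (x, t) ∈ D ∧ t ≤ y}

noncomputable def collapse (p : ℝ × ℝ) : ℝ × ℝ := (p.1, p.2 - (mfib D p.1 p.2).toReal)

variable {D}

lemma fib_closed (hDcl : IsClosed D) (x : ℝ) : IsClosed {t : ℝ | (x, t) ∈ D} :=
  hDcl.preimage (by fun_prop)

lemma fib_sub {R : ℝ} (hR : D ⊆ Metric.closedBall 0 R) (x : ℝ) :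
    {t : ℝ | (x, t) ∈ D} ⊆ Icc (-R) R := by
  intro t ht
  have := hR ht
  rw [Metric.mem_closedBall, Prod.dist_eq] at this
  have h2 : dist t (0:ℝ) ≤ R := le_trans (le_max_right _ _) this
  rw [Real.dist_eq, sub_zero] at h2
  exact abs_le.mp h2

lemma mfib_le {R : ℝ} (hR : D ⊆ Metric.closedBall 0 R) (x y : ℝ) :
    mfib D x y ≤ ENNReal.ofReal (2 * R) := by
  refine le_trans (measure_mono (fun t ht => fib_sub hR x ht.1)) ?_
  rw [Real.volume_Icc]
  exact ENNReal.ofReal_le_ofReal (by ring_nf; exact le_rfl)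

lemma mfib_fin {R : ℝ} (hR : D ⊆ Metric.closedBall 0 R) (x y : ℝ) :
    mfib D x y ≠ ⊤ :=
  ne_top_of_le_ne_top ENNReal.ofReal_ne_top (mfib_le hR x y)

lemma mfib_add (hDcl : IsClosed D) (x : ℝ) {a b : ℝ} (hab : a ≤ b) :
    mfib D x b = mfib D x a + volume ({t : ℝ | (x, t) ∈ D} ∩ Ioc a b) := by
  have hmeas : MeasurableSet ({t : ℝ | (x, t) ∈ D} ∩ Ioc a b) :=
    ((fib_closed hDcl x).measurableSet).inter measurableSet_Ioc
  have hsplit : {t : ℝ | (x, t) ∈ D ∧ t ≤ b} =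
      {t : ℝ | (x, t) ∈ D ∧ t ≤ a} ∪ ({t : ℝ | (x, t) ∈ D} ∩ Ioc a b) := by
    ext t
    simp only [mem_setOf_eq, mem_union, mem_inter_iff, mem_Ioc]
    constructor
    · rintro ⟨htD, htb⟩
      rcases le_or_gt t a with h | h
      · exact Or.inl ⟨htD, h⟩
      · exact Or.inr ⟨htD, h, htb⟩
    · rintro (⟨htD, hta⟩ | ⟨htD, -, htb⟩)
      · exact ⟨htD, hta.trans hab⟩
      · exact ⟨htD, htb⟩
  have hdisj : Disjoint {t : ℝ | (x, t) ∈ D ∧ t ≤ a} ({t : ℝ | (x, t) ∈ D} ∩ Ioc a b) := by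
    rw [disjoint_left]
    rintro t ⟨-, hta⟩ ⟨-, hta', -⟩
    exact absurd hta (not_le.mpr hta')
  rw [mfib, hsplit, measure_union hdisj hmeas]
  rfl

/-- Key equivalence: the collapse map identifies two points of the same vertical line iff the
whole segment between them lies in `D`. -/
lemma collapse_eq_iff (hDcl : IsClosed D) {R : ℝ} (hR : D ⊆ Metric.closedBall 0 R)
    (x : ℝ) {a b : ℝ} (hab : a < b) :
    b - (mfib D x b).toReal = a - (mfib D x a).toReal ↔ Icc a b ⊆ {t : ℝ | (x, t) ∈ D} := by
  set fibx := {t : ℝ | (x, t) ∈ D} with hfibx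
  have hadd := mfib_add hDcl x hab.le
  have hfin := mfib_fin hR x a
  have hfinIoc : volume (fibx ∩ Ioc a b) ≠ ⊤ :=
    ne_top_of_le_ne_top (by simp [Real.volume_Ioc]) (measure_mono inter_subset_right)
  have hIocle : volume (fibx ∩ Ioc a b) ≤ ENNReal.ofReal (b - a) := by
    refine le_trans (measure_mono inter_subset_right) ?_
    simp [Real.volume_Ioc]
  have htoReal : (mfib D x b).toReal = (mfib D x a).toReal + (volume (fibx ∩ Ioc a b)).toReal := by
    rw [hadd, ENNReal.toReal_add hfin hfinIoc]
  constructor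
  · intro heq
    have hlen : (volume (fibx ∩ Ioc a b)).toReal = b - a := by
      rw [htoReal] at heq
      linarith
    have hvol : volume (fibx ∩ Ioc a b) = ENNReal.ofReal (b - a) := by
      rw [← ENNReal.ofReal_toReal hfinIoc, hlen]
    -- the complement in Ioc is null
    have hnull : volume (Ioc a b \ fibx) = 0 := by
      have htotal := measure_inter_add_diff (μ := volume) (Ioc a b)
        (fib_closed hDcl x).measurableSet
      rw [inter_comm] at htotal
      rw [hvol, Real.volume_Ioc] at htotal
      have := htotal
      nth_rewrite 2 [← add_zero (ENNReal.ofReal (b-a))] at this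
      exact (ENNReal.add_right_inj ENNReal.ofReal_ne_top).mp this
    have hopen : IsOpen (Ioo a b \ fibx) := isOpen_Ioo.sdiff (fib_closed hDcl x)
    have hnull' : volume (Ioo a b \ fibx) = 0 :=
      measure_mono_null (diff_subset_diff_left Ioo_subset_Ioc_self) hnull
    have hempty : Ioo a b \ fibx = ∅ := hopen.eq_empty_of_measure_zero hnull'
    have hsub : Ioo a b ⊆ fibx := by
      rw [diff_eq_empty] at hempty
      exact hempty
    have : Icc a b = closure (Ioo a b) := (closure_Ioo hab.ne).symm
    rw [this]
    calc closure (Ioo a b) ⊆ closure fibx := closure_mono hsub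
      _ = fibx := (fib_closed hDcl x).closure_eq
  · intro hsub
    have : fibx ∩ Ioc a b = Ioc a b :=
      inter_eq_self_of_subset_right (Ioc_subset_Icc_self.trans hsub)
    rw [htoReal, this, Real.volume_Ioc, ENNReal.toReal_ofReal (by linarith)]
    ring


lemma mfib_eq_interior (hDcl : IsClosed D)
    (hnull : ∀ x : ℝ, volume {t : ℝ | (x, t) ∈ frontier D} = 0) (x y : ℝ) :
    volume {t : ℝ | (x, t) ∈ interior D ∧ t < y} = mfib D x y := by
  refine le_antisymm (measure_mono fun t ht => ⟨interior_subset ht.1, ht.2.le⟩) ?_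
  have hsub : {t : ℝ | (x, t) ∈ D ∧ t ≤ y} ⊆
      {t : ℝ | (x, t) ∈ interior D ∧ t < y} ∪ ({t : ℝ | (x, t) ∈ frontier D} ∪ {y}) := by
    rintro t ⟨htD, hty⟩
    rcases eq_or_lt_of_le hty with rfl | hlt
    · exact Or.inr (Or.inr rfl)
    · by_cases hint : (x, t) ∈ interior D
      · exact Or.inl ⟨hint, hlt⟩
      · refine Or.inr (Or.inl ?_)
        rw [hDcl.frontier_eq]
        exact ⟨htD, hint⟩
  calc mfib D x y ≤ volume ({t : ℝ | (x, t) ∈ interior D ∧ t < y} ∪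
        ({t : ℝ | (x, t) ∈ frontier D} ∪ {y})) := measure_mono hsub
    _ ≤ volume {t : ℝ | (x, t) ∈ interior D ∧ t < y} +
        volume ({t : ℝ | (x, t) ∈ frontier D} ∪ {y}) := measure_union_le _ _
    _ = volume {t : ℝ | (x, t) ∈ interior D ∧ t < y} := by
        have h1 : volume ({t : ℝ | (x, t) ∈ frontier D} ∪ ({y} : Set ℝ)) = 0 := by
          refine le_antisymm (le_trans (measure_union_le _ _) ?_) zero_le
          rw [hnull x, Real.volume_singleton, add_zero]
        rw [h1, add_zero]

lemma collapse_continuous (hDcpt : IsCompact D)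
    (hnull : ∀ x : ℝ, volume {t : ℝ | (x, t) ∈ frontier D} = 0) :
    Continuous (fun p : ℝ × ℝ => (mfib D p.1 p.2).toReal) := by
  obtain ⟨R, hR⟩ := (Metric.isBounded_iff_subset_closedBall 0).mp hDcpt.isBounded
  have hDcl := hDcpt.isClosed
  rw [continuous_iff_continuousAt]
  rintro ⟨x0, y0⟩
  rw [Metric.continuousAt_iff]
  intro ε hε
  obtain ⟨δu, hδu, hu⟩ := usc_fiber D hDcpt x0 y0 (half_pos hε)
  have hfin0 : volume {t : ℝ | (x0, t) ∈ interior D ∧ t < y0} ≠ ⊤ := by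
    rw [mfib_eq_interior hDcl hnull]
    exact mfib_fin hR x0 y0
  obtain ⟨δl, hδl, hl⟩ := lsc_fiber (interior D) isOpen_interior x0 y0 (half_pos hε) hfin0
  refine ⟨min δu δl, lt_min hδu hδl, ?_⟩
  rintro ⟨x, y⟩ hp
  have hx : dist x x0 < min δu δl := lt_of_le_of_lt (by rw [Prod.dist_eq]; exact le_max_left _ _) hp
  have hy : dist y y0 < min δu δl := lt_of_le_of_lt (by rw [Prod.dist_eq]; exact le_max_right _ _) hp
  have h1 : mfib D x y ≤ mfib D x0 y0 + ENNReal.ofReal (ε/2) :=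
    hu x y (hx.trans_le (min_le_left _ _)) (hy.trans_le (min_le_left _ _))
  have h2 : mfib D x0 y0 ≤ mfib D x y + ENNReal.ofReal (ε/2) := by
    rw [← mfib_eq_interior hDcl hnull x0 y0, ← mfib_eq_interior hDcl hnull x y]
    exact hl x y (hx.trans_le (min_le_right _ _)) (hy.trans_le (min_le_right _ _))
  have hfinxy := mfib_fin hR x y
  have hfin00 := mfib_fin hR x0 y0
  have hr1 : (mfib D x y).toReal ≤ (mfib D x0 y0).toReal + ε/2 := by
    have := ENNReal.toReal_mono (by finiteness) h1
    rwa [ENNReal.toReal_add hfin00 ENNReal.ofReal_ne_top,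
      ENNReal.toReal_ofReal (by positivity)] at this
  have hr2 : (mfib D x0 y0).toReal ≤ (mfib D x y).toReal + ε/2 := by
    have := ENNReal.toReal_mono (by finiteness) h2
    rwa [ENNReal.toReal_add hfinxy ENNReal.ofReal_ne_top,
      ENNReal.toReal_ofReal (by positivity)] at this
  rw [Real.dist_eq, abs_sub_lt_iff]
  constructor <;> [skip; skip] <;> simp only [] <;> linarith

lemma mfib_nonneg_bound {R : ℝ} (hR : D ⊆ Metric.closedBall 0 R) (hR0 : 0 ≤ R) (x y : ℝ) :
    (mfib D x y).toReal ∈ Icc 0 (2*R) := by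
  refine ⟨ENNReal.toReal_nonneg, ?_⟩
  have := ENNReal.toReal_mono ENNReal.ofReal_ne_top (mfib_le hR x y)
  rwa [ENNReal.toReal_ofReal (by positivity)] at this

lemma collapse_surjective (hDcpt : IsCompact D)
    (hnull : ∀ x : ℝ, volume {t : ℝ | (x, t) ∈ frontier D} = 0) :
    Function.Surjective (collapse D) := by
  obtain ⟨R0, hR0⟩ := (Metric.isBounded_iff_subset_closedBall 0).mp hDcpt.isBounded
  set R := max R0 0 with hRdef
  have hR : D ⊆ Metric.closedBall 0 R :=
    hR0.trans (Metric.closedBall_subset_closedBall (le_max_left _ _))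
  have hRpos : 0 ≤ R := le_max_right _ _
  rintro ⟨c1, c2⟩
  have hcont : ContinuousOn (fun y : ℝ => y - (mfib D c1 y).toReal) (Icc c2 (c2 + 2*R)) := by
    refine Continuous.continuousOn ?_
    exact continuous_id.sub ((collapse_continuous hDcpt hnull).comp
      (Continuous.prodMk_right c1))
  have hab : c2 ≤ c2 + 2*R := by linarith
  have hmem : c2 ∈ Icc ((fun y : ℝ => y - (mfib D c1 y).toReal) c2)
      ((fun y : ℝ => y - (mfib D c1 y).toReal) (c2 + 2*R)) := by
    constructor
    · simp only
      have := (mfib_nonneg_bound hR hRpos c1 c2).1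
      linarith
    · simp only
      have := (mfib_nonneg_bound hR hRpos c1 (c2 + 2*R)).2
      linarith
  obtain ⟨y, -, hy⟩ := intermediate_value_Icc hab hcont hmem
  exact ⟨(c1, y), by simp [collapse, hy]⟩

lemma collapse_proper (hDcpt : IsCompact D)
    (hnull : ∀ x : ℝ, volume {t : ℝ | (x, t) ∈ frontier D} = 0) :
    IsProperMap (collapse D) := by
  obtain ⟨R0, hR0⟩ := (Metric.isBounded_iff_subset_closedBall 0).mp hDcpt.isBounded
  set R := max R0 0 with hRdef
  have hR : D ⊆ Metric.closedBall 0 R :=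
    hR0.trans (Metric.closedBall_subset_closedBall (le_max_left _ _))
  have hRpos : 0 ≤ R := le_max_right _ _
  have hgcont : Continuous (collapse D) := by
    refine continuous_fst.prodMk ?_
    exact continuous_snd.sub (collapse_continuous hDcpt hnull)
  rw [isProperMap_iff_isCompact_preimage]
  refine ⟨hgcont, fun K hK => ?_⟩
  obtain ⟨RK, hRK⟩ := (Metric.isBounded_iff_subset_closedBall 0).mp hK.isBounded
  refine Metric.isCompact_of_isClosed_isBounded (hK.isClosed.preimage hgcont) ?_
  rw [Metric.isBounded_iff_subset_closedBall 0]
  refine ⟨RK + 2*R, fun p hp => ?_⟩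
  have h1 : collapse D p ∈ Metric.closedBall (0 : ℝ × ℝ) RK := hRK hp
  rw [Metric.mem_closedBall, dist_zero_right] at h1 ⊢
  have hpe : p = collapse D p + (0, (mfib D p.1 p.2).toReal) := by
    rw [collapse, Prod.mk_add_mk, add_zero, Prod.mk.injEq]
    exact ⟨rfl, by ring⟩
  calc ‖p‖ ≤ ‖collapse D p‖ + ‖((0 : ℝ), (mfib D p.1 p.2).toReal)‖ := by
        nth_rewrite 1 [hpe]; exact norm_add_le _ _
    _ ≤ RK + 2*R := by
        refine add_le_add h1 ?_
        rw [Prod.norm_def]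
        refine max_le (by simp; positivity) ?_
        rw [Real.norm_eq_abs, abs_of_nonneg ENNReal.toReal_nonneg]
        exact (mfib_nonneg_bound hR hRpos p.1 p.2).2

lemma req (r : ℝ × ℝ → ℝ × ℝ → Prop)
    (hr : ∀ p q : ℝ × ℝ, r p q ↔ p = q ∨
      (p ∈ D ∧ q ∈ D ∧ p.1 = q.1 ∧
        q ∈ connectedComponentIn (D ∩ {z : ℝ × ℝ | z.1 = p.1}) p)) :
    Equivalence r := by
  constructor
  · intro p
    exact (hr p p).mpr (Or.inl rfl)
  · intro p q hpq
    rw [hr] at hpq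
    rw [hr]
    rcases hpq with rfl | ⟨hp, hq, hx, hcc⟩
    · exact Or.inl rfl
    · refine Or.inr ⟨hq, hp, hx.symm, ?_⟩
      have hset : {z : ℝ × ℝ | z.1 = q.1} = {z : ℝ × ℝ | z.1 = p.1} := by
        ext z; rw [mem_setOf_eq, mem_setOf_eq, hx]
      rw [hset, ← connectedComponentIn_eq hcc]
      exact mem_connectedComponentIn ⟨hp, rfl⟩
  · intro p q s hpq hqs
    rw [hr] at hpq hqs
    rw [hr]
    rcases hpq with rfl | ⟨hp, hq, hx, hcc⟩
    · exact hqs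
    rcases hqs with rfl | ⟨-, hs, hx', hcc'⟩
    · exact Or.inr ⟨hp, hq, hx, hcc⟩
    · refine Or.inr ⟨hp, hs, hx.trans hx', ?_⟩
      have hset : {z : ℝ × ℝ | z.1 = q.1} = {z : ℝ × ℝ | z.1 = p.1} := by
        ext z; rw [mem_setOf_eq, mem_setOf_eq, hx]
      rw [hset] at hcc'
      rw [connectedComponentIn_eq hcc]
      exact hcc'

lemma seg_cc (x : ℝ) {a b : ℝ} (hab : a ≤ b) (hIcc : Icc a b ⊆ {t : ℝ | (x, t) ∈ D}) :
    (x, b) ∈ connectedComponentIn (D ∩ {z : ℝ × ℝ | z.1 = x}) (x, a) := by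
  set seg : Set (ℝ × ℝ) := ({x} : Set ℝ) ×ˢ Icc a b with hseg
  have hconn : IsPreconnected seg :=
    ((convex_singleton x).prod (convex_Icc a b)).isPreconnected
  have hsub : seg ⊆ D ∩ {z : ℝ × ℝ | z.1 = x} := by
    rintro ⟨u, t⟩ ⟨hu, ht⟩
    rw [mem_singleton_iff] at hu
    subst hu
    exact ⟨hIcc ht, rfl⟩
  have hmem : (x, a) ∈ seg := ⟨rfl, le_rfl, hab⟩
  exact hconn.subset_connectedComponentIn hmem hsub ⟨rfl, hab, le_rfl⟩

theorem aux_main (D : Set (ℝ × ℝ)) (hDcpt : IsCompact D)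
    (hnull : ∀ x : ℝ, volume {t : ℝ | (x, t) ∈ frontier D} = 0)
    (r : ℝ × ℝ → ℝ × ℝ → Prop)
    (hr : ∀ p q : ℝ × ℝ, r p q ↔ p = q ∨
      (p ∈ D ∧ q ∈ D ∧ p.1 = q.1 ∧
        q ∈ connectedComponentIn (D ∩ {z : ℝ × ℝ | z.1 = p.1}) p)) :
    Equivalence r ∧ Nonempty (Quot r ≃ₜ (ℝ × ℝ)) := by
  have hequiv : Equivalence r := req r hr
  refine ⟨hequiv, ?_⟩
  obtain ⟨R0, hR0⟩ := (Metric.isBounded_iff_subset_closedBall 0).mp hDcpt.isBounded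
  set R := max R0 0 with hRdef
  have hR : D ⊆ Metric.closedBall 0 R :=
    hR0.trans (Metric.closedBall_subset_closedBall (le_max_left _ _))
  have hDcl := hDcpt.isClosed
  set g := collapse D with hg
  -- the one-direction helper
  have hone : ∀ (x : ℝ) {a b : ℝ}, a < b →
      b - (mfib D x b).toReal = a - (mfib D x a).toReal → r (x, a) (x, b) := by
    intro x a b hab heq
    have hIcc := (collapse_eq_iff hDcl hR x hab).mp heq
    refine (hr _ _).mpr (Or.inr ⟨hIcc ⟨le_rfl, hab.le⟩, hIcc ⟨hab.le, le_rfl⟩, rfl, ?_⟩)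
    exact seg_cc x hab.le hIcc
  -- the characterization of the fibers of g
  have gEq : ∀ p q : ℝ × ℝ, g p = g q ↔ r p q := by
    intro p q
    constructor
    · intro hpq
      have h' := Prod.ext_iff.mp hpq
      simp only [hg, collapse] at h'
      obtain ⟨hx, h2⟩ := h'
      rw [← hx] at h2
      rcases lt_trichotomy p.2 q.2 with hlt | heq | hgt
      · have := hone p.1 hlt h2.symm
        have hp' : p = (p.1, p.2) := rfl
        have hq' : q = (p.1, q.2) := Prod.ext hx.symm rfl
        rw [hp', hq']
        exact this
      · have : p = q := Prod.ext hx heq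
        exact (hr p q).mpr (Or.inl this)
      · have := hone p.1 hgt h2
        have hp' : p = (p.1, p.2) := rfl
        have hq' : q = (p.1, q.2) := Prod.ext hx.symm rfl
        rw [hp', hq']
        exact hequiv.symm this
    · intro hpq
      rcases (hr p q).mp hpq with rfl | ⟨hp, hq, hx, hcc⟩
      · rfl
      have hTsub : connectedComponentIn (D ∩ {z : ℝ × ℝ | z.1 = p.1}) p ⊆
          D ∩ {z : ℝ × ℝ | z.1 = p.1} := connectedComponentIn_subset _ _
      have himg : IsPreconnected (Prod.snd ''
          connectedComponentIn (D ∩ {z : ℝ × ℝ | z.1 = p.1}) p) :=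
        (isPreconnected_connectedComponentIn).image _ continuous_snd.continuousOn
      have himg_sub : Prod.snd '' connectedComponentIn (D ∩ {z : ℝ × ℝ | z.1 = p.1}) p ⊆
          {t : ℝ | (p.1, t) ∈ D} := by
        rintro - ⟨z, hz, rfl⟩
        obtain ⟨hzD, hz1⟩ := hTsub hz
        rw [mem_setOf_eq] at hz1 ⊢
        rw [← hz1]
        exact hzD
      have hpm : p.2 ∈ Prod.snd '' connectedComponentIn (D ∩ {z : ℝ × ℝ | z.1 = p.1}) p :=
        ⟨p, mem_connectedComponentIn ⟨hp, rfl⟩, rfl⟩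
      have hqm : q.2 ∈ Prod.snd '' connectedComponentIn (D ∩ {z : ℝ × ℝ | z.1 = p.1}) p :=
        ⟨q, hcc, rfl⟩
      have hsnd : p.2 - (mfib D p.1 p.2).toReal = q.2 - (mfib D p.1 q.2).toReal := by
        rcases lt_trichotomy p.2 q.2 with hlt | heq | hgt
        · have hIcc : Icc p.2 q.2 ⊆ {t : ℝ | (p.1, t) ∈ D} :=
            (himg.Icc_subset hpm hqm).trans himg_sub
          exact ((collapse_eq_iff hDcl hR p.1 hlt).mpr hIcc).symm
        · rw [heq]
        · have hIcc : Icc q.2 p.2 ⊆ {t : ℝ | (p.1, t) ∈ D} :=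
            (himg.Icc_subset hqm hpm).trans himg_sub
          exact (collapse_eq_iff hDcl hR p.1 hgt).mpr hIcc
      refine Prod.ext hx ?_
      show p.2 - (mfib D p.1 p.2).toReal = q.2 - (mfib D q.1 q.2).toReal
      rw [← hx]
      exact hsnd
  -- quotient map machinery
  have hgcont : Continuous g := by
    refine continuous_fst.prodMk ?_
    exact continuous_snd.sub (collapse_continuous hDcpt hnull)
  have hgsurj : Function.Surjective g := collapse_surjective hDcpt hnull
  have hgproper : IsProperMap g := collapse_proper hDcpt hnull
  have hgqm : Topology.IsQuotientMap g := hgproper.isClosedMap.isQuotientMap hgcont hgsurj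
  -- lift to the quotient
  set h : Quot r → ℝ × ℝ := Quot.lift g (fun p q hpq => (gEq p q).mpr hpq) with hh
  have hhcont : Continuous h := continuous_quot_lift _ hgcont
  have hcomp : g = h ∘ Quot.mk r := rfl
  have hhqm : Topology.IsQuotientMap h :=
    Topology.IsQuotientMap.of_comp continuous_quot_mk hhcont (hcomp ▸ hgqm)
  have hhinj : Function.Injective h := by
    intro a b
    refine Quot.induction_on₂ a b ?_
    intro p q hpq
    exact Quot.sound ((gEq p q).mp hpq)
  have hhopen : IsOpenMap h := by
    intro U hU
    have hpre : h ⁻¹' (h '' U) = U := hhinj.preimage_image U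
    exact hhqm.isOpen_preimage.mp (by rwa [hpre])
  exact ⟨Equiv.toHomeomorphOfContinuousOpen
    (Equiv.ofBijective h ⟨hhinj, hhqm.surjective⟩) hhcont hhopen⟩

end aux


/-- Let `F : ℝ² → ℝ` be a nonconstant polynomial function, `C` a nonempty compact
connected component of its zero set on which `∇F` never vanishes, and `D` the topological disk
bounded by `C` (the union of `C` with the points of `ℝ² \ C` whose connected component in
`ℝ² \ C` is bounded). Define `p ∼ q` iff `p = q`, or `p, q ∈ D` have the same first coordinate
and `q` lies in the connected component of `p` in the vertical fiber `D ∩ ({p.1} × ℝ)`. Then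
`∼` is an equivalence relation and the quotient topological space `ℝ²/∼` is homeomorphic
to `ℝ²`. -/
theorem poincare_reeb_quotient_plane (F : ℝ × ℝ → ℝ)
    (hpoly : ∃ P : MvPolynomial (Fin 2) ℝ,
      ∀ q : ℝ × ℝ, F q = MvPolynomial.eval ![q.1, q.2] P)
    (hnc : ¬ ∃ c : ℝ, ∀ q : ℝ × ℝ, F q = c)
    (C : Set (ℝ × ℝ))
    (hCcc : ∃ p ∈ F ⁻¹' {0}, C = connectedComponentIn (F ⁻¹' {0}) p)
    (hCne : C.Nonempty) (hCcpt : IsCompact C)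
    (hsmooth : ∀ p ∈ C, fderiv ℝ F p ≠ 0)
    (D : Set (ℝ × ℝ))
    (hD : D = C ∪ {p : ℝ × ℝ | p ∉ C ∧ Bornology.IsBounded (connectedComponentIn Cᶜ p)})
    (r : ℝ × ℝ → ℝ × ℝ → Prop)
    (hr : ∀ p q : ℝ × ℝ, r p q ↔ p = q ∨
      (p ∈ D ∧ q ∈ D ∧ p.1 = q.1 ∧
        q ∈ connectedComponentIn (D ∩ {z : ℝ × ℝ | z.1 = p.1}) p)) :
    Equivalence r ∧ Nonempty (Quot r ≃ₜ (ℝ × ℝ)) := by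
  obtain ⟨hDcpt, hfr⟩ := D_facts hCcpt hD
  have hnull : ∀ x : ℝ, volume {t : ℝ | (x, t) ∈ frontier D} = 0 := fun x =>
    measure_mono_null (fun t ht => hfr ht) (fiber_null F hpoly C hCcc hCcpt x)
  exact aux_main D hDcpt hnull r hr
end
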